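/- arXiv:2303.12687 — 7 statements merged into one kernel-verified Lean document; each statement's English description precedes it below -/
import Mathlib

section
/- For every measurable g : 𝒱 → ℝ (with all expectations below finite), E[(A·Y/π(X) − (1−A)·Y/(1−π(X)) − g(V))²] = E[((Y¹−Y⁰) − g(V))²] + E[(A·Y/π(X) − (1−A)·Y/(1−π(X)) − (Y¹−Y⁰))²] + 2·E[(A·Y/π(X) − (1−A)·Y/(1−π(X)) − (Y¹−Y⁰))·(Y¹−Y⁰)]. In particular, since the last two terms do not depend on g, for any two such functions g, g' one has E[(A·Y/π(X) − (1−A)·Y/(1−π(X)) − g(V))²] − E[(A·Y/π(X) − (1−A)·Y/(1−π(X)) − g'(V))²] = E[((Y¹−Y⁰) − g(V))²] − E[((Y¹−Y⁰) − g'(V))²], so the inverse-probability-weighted population risk and the oracle population risk have the same minimizers over any class of functions. -/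
/-!
Write `τ = Y¹ − Y⁰` and `Φ` for the IPW pseudo-outcome. When `A ∈ {0, 1}` and `Y` obeys
consistency, `Φ − τ = (A − π(X)) · (Y¹/π(X) + Y⁰/(1 − π(X)))`. Conditional exchangeability makes
`π(X)` a version of `E[A | X, Y⁰, Y¹]`, so `E[(Φ − τ) · h] = 0` for every `h` measurable with
respect to `σ(X, Y⁰, Y¹)`, in particular for `h = g(V)`. Expanding
`(Φ − g(V))² = ((τ − g(V)) + (Φ − τ))²` then gives the decomposition.
-/

open MeasureTheory ProbabilityTheory

noncomputable def ipwPseudo {Ω 𝓧 : Type*} (A Y : Ω → ℝ) (X : Ω → 𝓧) (pr : 𝓧 → ℝ)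
    (ω : Ω) : ℝ :=
  A ω * Y ω / pr (X ω) - (1 - A ω) * Y ω / (1 - pr (X ω))

section General

variable {Ω : Type*} {mΩ : MeasurableSpace Ω} {P : Measure Ω}

theorem condExp_comap_prodMk_ae_eq_of_condIndepFun {α β : Type*} [MeasurableSpace α]
    [MeasurableSpace β] [StandardBorelSpace β] [Nonempty β] [StandardBorelSpace Ω]
    [IsFiniteMeasure P] {X : Ω → α} {W : Ω → β} {A : Ω → ℝ} (hX : Measurable X)
    (hW : Measurable W) (hA : Measurable A) (hA_int : Integrable A P) (h : W ⟂ᵢ[X, hX; P] A) :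
    P[A | MeasurableSpace.comap (fun ω => (X ω, W ω)) inferInstance] =ᵐ[P]
      P[A | MeasurableSpace.comap X inferInstance] := by
  have hXW : Measurable fun ω => (X ω, W ω) := hX.prodMk hW
  have h_kernel : ∀ᵐ ω ∂P,
      condDistrib A (fun ω => (X ω, W ω)) P (X ω, W ω) = condDistrib A X P (X ω) :=
    ae_of_ae_map hXW.aemeasurable
      ((condIndepFun_iff_condDistrib_prod_ae_eq_prodMkRight hA hW hX).1 h)
  filter_upwards [condExp_ae_eq_integral_condDistrib' hXW hA_int,
    condExp_ae_eq_integral_condDistrib' hX hA_int, h_kernel] with ω hXW_ω hX_ω hk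
  rw [hXW_ω, hX_ω, hk]

theorem integral_mul_eq_zero_of_condExp_ae_eq_zero {m : MeasurableSpace Ω} (hm : m ≤ mΩ)
    [SigmaFinite (P.trim hm)] {K B : Ω → ℝ} (hK : StronglyMeasurable[m] K)
    (hKB : Integrable (K * B) P) (hB : Integrable B P) (hB_zero : P[B | m] =ᵐ[P] 0) :
    ∫ ω, (K * B) ω ∂P = 0 := by
  have h_zero : P[K * B | m] =ᵐ[P] 0 := by
    filter_upwards [condExp_mul_of_stronglyMeasurable_left hK hKB hB, hB_zero] with ω h1 h2
    rw [h1, Pi.mul_apply, h2, Pi.zero_apply, mul_zero]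
  rw [← integral_condExp hm, integral_congr_ae h_zero, integral_zero']

theorem integral_sq_sub_eq_of_integral_mul_eq_zero {Φ τ h : Ω → ℝ}
    (h_int₁ : Integrable (fun ω => (τ ω - h ω) ^ 2) P)
    (h_int₂ : Integrable (fun ω => (Φ ω - τ ω) ^ 2) P)
    (h_int₃ : Integrable (fun ω => (Φ ω - τ ω) * τ ω) P)
    (h_int₄ : Integrable (fun ω => (Φ ω - τ ω) * h ω) P)
    (h_orth : ∫ ω, (Φ ω - τ ω) * h ω ∂P = 0) :
    ∫ ω, (Φ ω - h ω) ^ 2 ∂P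
      = ∫ ω, (τ ω - h ω) ^ 2 ∂P + ∫ ω, (Φ ω - τ ω) ^ 2 ∂P
        + 2 * ∫ ω, (Φ ω - τ ω) * τ ω ∂P := by
  have h_expand : (fun ω => (Φ ω - h ω) ^ 2) = fun ω => (τ ω - h ω) ^ 2 + (Φ ω - τ ω) ^ 2
      + 2 * ((Φ ω - τ ω) * τ ω) - 2 * ((Φ ω - τ ω) * h ω) := by
    ext ω; ring
  have h_int₁₂ : Integrable (fun ω => (τ ω - h ω) ^ 2 + (Φ ω - τ ω) ^ 2) P := h_int₁.add h_int₂
  have h_int₁₂₃ : Integrable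
      (fun ω => (τ ω - h ω) ^ 2 + (Φ ω - τ ω) ^ 2 + 2 * ((Φ ω - τ ω) * τ ω)) P :=
    h_int₁₂.add (h_int₃.const_mul 2)
  rw [h_expand, integral_sub h_int₁₂₃ (h_int₄.const_mul 2),
    integral_add h_int₁₂ (h_int₃.const_mul 2), integral_add h_int₁ h_int₂,
    integral_const_mul, integral_const_mul, h_orth, mul_zero, sub_zero]

end General

theorem ipwPseudo_sub_eq_mul {Ω 𝓧 : Type*} {A Y Y0 Y1 : Ω → ℝ} {X : Ω → 𝓧} {pr : 𝓧 → ℝ}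
    {ω : Ω} (hA : A ω = 0 ∨ A ω = 1) (hY : Y ω = A ω * Y1 ω + (1 - A ω) * Y0 ω)
    (hpr₀ : pr (X ω) ≠ 0) (hpr₁ : 1 - pr (X ω) ≠ 0) :
    ipwPseudo A Y X pr ω - (Y1 ω - Y0 ω)
      = (A ω - pr (X ω)) * (Y1 ω / pr (X ω) + Y0 ω / (1 - pr (X ω))) := by
  rw [ipwPseudo, hY]
  rcases hA with h | h <;> rw [h] <;> field_simp <;> ring

section Causal

variable {Ω 𝓧 : Type*} [MeasurableSpace Ω] [StandardBorelSpace Ω] [MeasurableSpace 𝓧]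
  {P : Measure Ω} [IsFiniteMeasure P] {X : Ω → 𝓧} {A : Ω → ℝ} {pr : 𝓧 → ℝ}

theorem condExp_sub_propensity_comap_prodMk_ae_eq_zero {β : Type*} [MeasurableSpace β]
    [StandardBorelSpace β] [Nonempty β] {W : Ω → β} (hX : Measurable X) (hW : Measurable W)
    (hA : Measurable A) (hA_int : Integrable A P) (hprm : Measurable pr)
    (hpr_int : Integrable (fun ω => pr (X ω)) P)
    (hprCE : (fun ω => pr (X ω)) =ᵐ[P] P[A | MeasurableSpace.comap X inferInstance])
    (hCE : W ⟂ᵢ[X, hX; P] A) :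
    P[A - fun ω => pr (X ω) | MeasurableSpace.comap (fun ω => (X ω, W ω)) inferInstance]
      =ᵐ[P] 0 := by
  have h_pr : P[fun ω => pr (X ω) | MeasurableSpace.comap (fun ω => (X ω, W ω)) inferInstance]
      = fun ω => pr (X ω) :=
    condExp_of_stronglyMeasurable (hX.prodMk hW).comap_le
      (hprm.comp (measurable_fst.comp (comap_measurable _))).stronglyMeasurable hpr_int
  filter_upwards [condExp_sub hA_int hpr_int _,
    condExp_comap_prodMk_ae_eq_of_condIndepFun hX hW hA hA_int hCE, hprCE] with ω h_sub h_A hpr_ω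
  rw [h_sub, Pi.sub_apply, h_A, h_pr, ← hpr_ω, Pi.zero_apply, sub_self]

variable {Y0 Y1 Y : Ω → ℝ}

theorem integral_ipwPseudo_sub_mul_eq_zero (hX : Measurable X) (hA : Measurable A)
    (hY0 : Measurable Y0) (hY1 : Measurable Y1) (hA01 : ∀ ω, A ω = 0 ∨ A ω = 1)
    (hYdef : ∀ ω, Y ω = A ω * Y1 ω + (1 - A ω) * Y0 ω)
    (hprm : Measurable pr) (hpr : ∀ x, 0 < pr x ∧ pr x < 1)
    (hprCE : (fun ω => pr (X ω)) =ᵐ[P] P[A | MeasurableSpace.comap X inferInstance])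
    (hCE : (fun ω => (Y0 ω, Y1 ω)) ⟂ᵢ[X, hX; P] A)
    {G : 𝓧 → ℝ} (hG : Measurable G)
    (h_int : Integrable (fun ω => (ipwPseudo A Y X pr ω - (Y1 ω - Y0 ω)) * G (X ω)) P) :
    ∫ ω, (ipwPseudo A Y X pr ω - (Y1 ω - Y0 ω)) * G (X ω) ∂P = 0 := by
  set Z : Ω → 𝓧 × ℝ × ℝ := fun ω => (X ω, Y0 ω, Y1 ω)
  have hA_int : Integrable A P := Integrable.of_bound hA.aestronglyMeasurable 1
    (ae_of_all _ fun ω => by rcases hA01 ω with h | h <;> simp [h])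
  have hpr_int : Integrable (fun ω => pr (X ω)) P :=
    Integrable.of_bound (hprm.comp hX).aestronglyMeasurable 1 (ae_of_all _ fun ω => by
      rw [Real.norm_eq_abs, abs_le]; constructor <;> linarith [hpr (X ω)])
  set K : Ω → ℝ := fun ω => (Y1 ω / pr (X ω) + Y0 ω / (1 - pr (X ω))) * G (X ω)
  have h_eq : (fun ω => (ipwPseudo A Y X pr ω - (Y1 ω - Y0 ω)) * G (X ω))
      = K * (A - fun ω => pr (X ω)) := by
    ext ω
    rw [ipwPseudo_sub_eq_mul (hA01 ω) (hYdef ω) (hpr (X ω)).1.ne'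
      (sub_ne_zero.2 (hpr (X ω)).2.ne')]
    simp only [K, Pi.mul_apply, Pi.sub_apply]
    ring
  have hK : StronglyMeasurable[MeasurableSpace.comap Z inferInstance] K := by
    have hX_Z : Measurable[MeasurableSpace.comap Z inferInstance] X :=
      measurable_fst.comp (comap_measurable Z)
    have hY0_Z : Measurable[MeasurableSpace.comap Z inferInstance] Y0 :=
      (measurable_fst.comp measurable_snd).comp (comap_measurable Z)
    have hY1_Z : Measurable[MeasurableSpace.comap Z inferInstance] Y1 :=
      (measurable_snd.comp measurable_snd).comp (comap_measurable Z)
    exact (((hY1_Z.div (hprm.comp hX_Z)).add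
      (hY0_Z.div (measurable_const.sub (hprm.comp hX_Z)))).mul (hG.comp hX_Z)).stronglyMeasurable
  rw [h_eq] at h_int ⊢
  exact integral_mul_eq_zero_of_condExp_ae_eq_zero (hX.prodMk (hY0.prodMk hY1)).comap_le hK
    h_int (hA_int.sub hpr_int) (condExp_sub_propensity_comap_prodMk_ae_eq_zero hX
      (hY0.prodMk hY1) hA hA_int hprm hpr_int hprCE hCE)

end Causal

theorem stmt0_general {Ω 𝓧 𝓥 : Type*} [MeasurableSpace Ω] [StandardBorelSpace Ω]
    [MeasurableSpace 𝓧] [MeasurableSpace 𝓥]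
    (P : Measure Ω) [IsProbabilityMeasure P]
    (X : Ω → 𝓧) (hX : Measurable X) (v : 𝓧 → 𝓥) (hv : Measurable v)
    (A Y0 Y1 Y : Ω → ℝ) (hA : Measurable A) (hY0 : Measurable Y0) (hY1 : Measurable Y1)
    (hA01 : ∀ ω, A ω = 0 ∨ A ω = 1)
    (hYdef : ∀ ω, Y ω = A ω * Y1 ω + (1 - A ω) * Y0 ω)
    (pr : 𝓧 → ℝ) (hprm : Measurable pr) (hpr : ∀ x, 0 < pr x ∧ pr x < 1)
    (hprCE : (fun ω => pr (X ω)) =ᵐ[P] P[A | MeasurableSpace.comap X inferInstance])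
    (hCE : CondIndepFun (MeasurableSpace.comap X inferInstance) hX.comap_le
      (fun ω => (Y0 ω, Y1 ω)) A P)
    (g g' : 𝓥 → ℝ) (hg : Measurable g) (hg' : Measurable g')
    (hI2 : Integrable (fun ω => ((Y1 ω - Y0 ω) - g (v (X ω))) ^ 2) P)
    (hI2' : Integrable (fun ω => ((Y1 ω - Y0 ω) - g' (v (X ω))) ^ 2) P)
    (hI3 : Integrable (fun ω => (ipwPseudo A Y X pr ω - (Y1 ω - Y0 ω)) ^ 2) P)
    (hI4 : Integrable (fun ω => (ipwPseudo A Y X pr ω - (Y1 ω - Y0 ω)) * (Y1 ω - Y0 ω)) P)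
    (hI5 : Integrable (fun ω => (ipwPseudo A Y X pr ω - (Y1 ω - Y0 ω)) * g (v (X ω))) P)
    (hI5' : Integrable (fun ω => (ipwPseudo A Y X pr ω - (Y1 ω - Y0 ω)) * g' (v (X ω))) P) :
    (∫ ω, (ipwPseudo A Y X pr ω - g (v (X ω))) ^ 2 ∂P
      = ∫ ω, ((Y1 ω - Y0 ω) - g (v (X ω))) ^ 2 ∂P
        + ∫ ω, (ipwPseudo A Y X pr ω - (Y1 ω - Y0 ω)) ^ 2 ∂P
        + 2 * ∫ ω, (ipwPseudo A Y X pr ω - (Y1 ω - Y0 ω)) * (Y1 ω - Y0 ω) ∂P)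
    ∧ (∫ ω, (ipwPseudo A Y X pr ω - g' (v (X ω))) ^ 2 ∂P
      = ∫ ω, ((Y1 ω - Y0 ω) - g' (v (X ω))) ^ 2 ∂P
        + ∫ ω, (ipwPseudo A Y X pr ω - (Y1 ω - Y0 ω)) ^ 2 ∂P
        + 2 * ∫ ω, (ipwPseudo A Y X pr ω - (Y1 ω - Y0 ω)) * (Y1 ω - Y0 ω) ∂P)
    ∧ (∫ ω, (ipwPseudo A Y X pr ω - g (v (X ω))) ^ 2 ∂P
        - ∫ ω, (ipwPseudo A Y X pr ω - g' (v (X ω))) ^ 2 ∂P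
      = ∫ ω, ((Y1 ω - Y0 ω) - g (v (X ω))) ^ 2 ∂P
        - ∫ ω, ((Y1 ω - Y0 ω) - g' (v (X ω))) ^ 2 ∂P) := by
  have h_orth : ∀ G : 𝓥 → ℝ, Measurable G →
      Integrable (fun ω => (ipwPseudo A Y X pr ω - (Y1 ω - Y0 ω)) * G (v (X ω))) P →
      ∫ ω, (ipwPseudo A Y X pr ω - (Y1 ω - Y0 ω)) * G (v (X ω)) ∂P = 0 :=
    fun G hG h_int => integral_ipwPseudo_sub_mul_eq_zero hX hA hY0 hY1 hA01 hYdef hprm hpr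
      hprCE hCE (hG.comp hv) h_int
  have h_risk := integral_sq_sub_eq_of_integral_mul_eq_zero hI2 hI3 hI4 hI5 (h_orth g hg hI5)
  have h_risk' :=
    integral_sq_sub_eq_of_integral_mul_eq_zero hI2' hI3 hI4 hI5' (h_orth g' hg' hI5')
  exact ⟨h_risk, h_risk', by rw [h_risk, h_risk']; ring⟩

/-- the IPW population risk decomposes as the oracle risk plus terms not
depending on `g`; consequently the IPW risk and the oracle risk have the same minimizers. -/
theorem stmt0 {Ω 𝓧 𝓥 : Type*} [MeasurableSpace Ω] [StandardBorelSpace Ω]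
    [MeasurableSpace 𝓧] [MeasurableSpace 𝓥]
    (P : Measure Ω) [IsProbabilityMeasure P]
    (X : Ω → 𝓧) (hX : Measurable X) (v : 𝓧 → 𝓥) (hv : Measurable v)
    (A Y0 Y1 Y : Ω → ℝ) (hA : Measurable A) (hY0 : Measurable Y0) (hY1 : Measurable Y1)
    (hA01 : ∀ ω, A ω = 0 ∨ A ω = 1)
    (hYdef : ∀ ω, Y ω = A ω * Y1 ω + (1 - A ω) * Y0 ω)
    (pr : 𝓧 → ℝ) (hprm : Measurable pr) (hpr : ∀ x, 0 < pr x ∧ pr x < 1)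
    (hprCE : (fun ω => pr (X ω)) =ᵐ[P] P[A | MeasurableSpace.comap X inferInstance])
    (hCE : CondIndepFun (MeasurableSpace.comap X inferInstance) hX.comap_le
      (fun ω => (Y0 ω, Y1 ω)) A P)
    (g g' : 𝓥 → ℝ) (hg : Measurable g) (hg' : Measurable g')
    (hI1 : Integrable (fun ω => (ipwPseudo A Y X pr ω - g (v (X ω))) ^ 2) P)
    (hI1' : Integrable (fun ω => (ipwPseudo A Y X pr ω - g' (v (X ω))) ^ 2) P)
    (hI2 : Integrable (fun ω => ((Y1 ω - Y0 ω) - g (v (X ω))) ^ 2) P)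
    (hI2' : Integrable (fun ω => ((Y1 ω - Y0 ω) - g' (v (X ω))) ^ 2) P)
    (hI3 : Integrable (fun ω => (ipwPseudo A Y X pr ω - (Y1 ω - Y0 ω)) ^ 2) P)
    (hI4 : Integrable (fun ω => (ipwPseudo A Y X pr ω - (Y1 ω - Y0 ω)) * (Y1 ω - Y0 ω)) P)
    (hI5 : Integrable (fun ω => (ipwPseudo A Y X pr ω - (Y1 ω - Y0 ω)) * g (v (X ω))) P)
    (hI5' : Integrable (fun ω => (ipwPseudo A Y X pr ω - (Y1 ω - Y0 ω)) * g' (v (X ω))) P) :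
    (∫ ω, (ipwPseudo A Y X pr ω - g (v (X ω))) ^ 2 ∂P
      = ∫ ω, ((Y1 ω - Y0 ω) - g (v (X ω))) ^ 2 ∂P
        + ∫ ω, (ipwPseudo A Y X pr ω - (Y1 ω - Y0 ω)) ^ 2 ∂P
        + 2 * ∫ ω, (ipwPseudo A Y X pr ω - (Y1 ω - Y0 ω)) * (Y1 ω - Y0 ω) ∂P)
    ∧ (∫ ω, (ipwPseudo A Y X pr ω - g' (v (X ω))) ^ 2 ∂P
      = ∫ ω, ((Y1 ω - Y0 ω) - g' (v (X ω))) ^ 2 ∂P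
        + ∫ ω, (ipwPseudo A Y X pr ω - (Y1 ω - Y0 ω)) ^ 2 ∂P
        + 2 * ∫ ω, (ipwPseudo A Y X pr ω - (Y1 ω - Y0 ω)) * (Y1 ω - Y0 ω) ∂P)
    ∧ (∫ ω, (ipwPseudo A Y X pr ω - g (v (X ω))) ^ 2 ∂P
        - ∫ ω, (ipwPseudo A Y X pr ω - g' (v (X ω))) ^ 2 ∂P
      = ∫ ω, ((Y1 ω - Y0 ω) - g (v (X ω))) ^ 2 ∂P
        - ∫ ω, ((Y1 ω - Y0 ω) - g' (v (X ω))) ^ 2 ∂P) :=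
  stmt0_general P X hX v hv A Y0 Y1 Y hA hY0 hY1 hA01 hYdef pr hprm hpr hprCE hCE g g' hg hg' hI2
    hI2' hI3 hI4 hI5 hI5'
end

section
/- The inverse-probability-weighted pseudo-outcome identifies the conditional treatment effect: E[A·Y/π(X) − (1−A)·Y/(1−π(X)) | σ(X)] = E[Y¹ − Y⁰ | σ(X)] P-almost surely. -/
open MeasureTheory ProbabilityTheory

/-! Conditional exchangeability makes the event `{A = 1}` conditionally independent of
`(Y⁰, Y¹)` given `σ(X)`, so `π(X)` is also the conditional probability of treatment given the
larger σ-algebra `σ(X) ⊔ σ(Y⁰, Y¹)`. Given that σ-algebra the potential outcomes are known and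
can be pulled out: `E[A·Y¹/π(X) | σ(X, Y⁰, Y¹)] = Y¹·π(X)/π(X) = Y¹`, and likewise for the control
arm. The tower property then conditions back down to `σ(X)`. -/

section

open Set

theorem IsPiSystem.image2_inter {α : Type*} {S T : Set (Set α)} (hS : IsPiSystem S)
    (hT : IsPiSystem T) : IsPiSystem (image2 (· ∩ ·) S T) := by
  rintro _ ⟨s₁, hs₁, t₁, ht₁, rfl⟩ _ ⟨s₂, hs₂, t₂, ht₂, rfl⟩ hne
  refine ⟨s₁ ∩ s₂, hS _ hs₁ _ hs₂ (hne.mono ?_), t₁ ∩ t₂, hT _ ht₁ _ ht₂ (hne.mono ?_), ?_⟩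
  · exact fun x hx => ⟨hx.1.1, hx.2.1⟩
  · exact fun x hx => ⟨hx.1.2, hx.2.2⟩
  · exact inter_inter_inter_comm s₁ s₂ t₁ t₂

theorem MeasurableSpace.generateFrom_image2_inter {α : Type*} (m₁ m₂ : MeasurableSpace α) :
    generateFrom (image2 (· ∩ ·) {s | MeasurableSet[m₁] s} {t | MeasurableSet[m₂] t}) =
      m₁ ⊔ m₂ := by
  apply le_antisymm
  · rw [generateFrom_le_iff]
    rintro _ ⟨s, hs, t, ht, rfl⟩
    exact (le_sup_left (b := m₂) s hs).inter (le_sup_right (a := m₁) t ht)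
  · refine sup_le (fun s hs => ?_) (fun t ht => ?_)
    · exact measurableSet_generateFrom ⟨s, hs, univ, MeasurableSet.univ, inter_univ s⟩
    · exact measurableSet_generateFrom ⟨univ, MeasurableSet.univ, t, ht, univ_inter t⟩

theorem setIntegral_eq_of_isPiSystem {Ω E : Type*} [NormedAddCommGroup E] [NormedSpace ℝ E]
    {m mΩ : MeasurableSpace Ω} {μ : Measure Ω} {S : Set (Set Ω)} {f g : Ω → E}
    (hm : m ≤ mΩ) (hgen : m = MeasurableSpace.generateFrom S) (hS : IsPiSystem S)
    (hf : Integrable f μ) (hg : Integrable g μ) (huniv : ∫ ω, f ω ∂μ = ∫ ω, g ω ∂μ)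
    (hfg : ∀ s ∈ S, ∫ ω in s, f ω ∂μ = ∫ ω in s, g ω ∂μ) {s : Set Ω} (hs : MeasurableSet[m] s) :
    ∫ ω in s, f ω ∂μ = ∫ ω in s, g ω ∂μ := by
  induction s, hs using MeasurableSpace.induction_on_inter hgen hS with
  | empty => simp
  | basic s hs => exact hfg s hs
  | compl s hs ih =>
    rw [setIntegral_compl (hm s hs) hf, setIntegral_compl (hm s hs) hg, ih, huniv]
  | iUnion s hdisj hs ih =>
    rw [integral_iUnion (fun i => hm _ (hs i)) hdisj hf.integrableOn,
      integral_iUnion (fun i => hm _ (hs i)) hdisj hg.integrableOn]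
    exact tsum_congr ih

theorem Set.indicator_eq_indicator_one_mul {α M₀ : Type*} [MulZeroOneClass M₀] (s : Set α)
    (f : α → M₀) : s.indicator f = s.indicator (fun _ => (1 : M₀)) * f := by
  ext x; by_cases hx : x ∈ s <;> simp [hx]

theorem CondIndep.condExp_indicator_sup_eq {Ω : Type*} {m' m₁ m₂ mΩ : MeasurableSpace Ω}
    [StandardBorelSpace Ω] {hm' : m' ≤ mΩ} {μ : Measure Ω} [IsFiniteMeasure μ]
    (hm₁ : m₁ ≤ mΩ) (hm₂ : m₂ ≤ mΩ) (h : CondIndep m' m₁ m₂ hm' μ) {t : Set Ω}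
    (ht : MeasurableSet[m₂] t) : μ⟦t | m' ⊔ m₁⟧ =ᵐ[μ] μ⟦t | m'⟧ := by
  have hle : m' ⊔ m₁ ≤ mΩ := sup_le hm' hm₁
  have hint : ∀ {s}, MeasurableSet s → Integrable (s.indicator fun _ => (1 : ℝ)) μ :=
    fun hs => (integrable_const (1 : ℝ)).indicator hs
  refine (ae_eq_condExp_of_forall_setIntegral_eq hle (hint (hm₂ t ht))
    (fun s _ _ => integrable_condExp.integrableOn) (fun s hs _ => ?_)
    (stronglyMeasurable_condExp.mono (le_sup_left : m' ≤ m' ⊔ m₁)).aestronglyMeasurable).symm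
  -- By Dynkin's π-λ theorem it suffices to test on the sets `G ∩ B`, where the product rule
  -- `μ⟦B ∩ t | m'⟧ = μ⟦B | m'⟧ * μ⟦t | m'⟧` of conditional independence applies.
  refine setIntegral_eq_of_isPiSystem hle (MeasurableSpace.generateFrom_image2_inter m' m₁).symm
    (m'.isPiSystem_measurableSet.image2_inter m₁.isPiSystem_measurableSet) integrable_condExp
    (hint (hm₂ t ht)) (integral_condExp hm') ?_ hs
  rintro _ ⟨G, hG, B, hB, rfl⟩
  have hBt : Integrable (B.indicator (fun _ => (1 : ℝ)) * μ⟦t | m'⟧) μ := by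
    rw [← indicator_eq_indicator_one_mul]; exact integrable_condExp.indicator (hm₁ B hB)
  have hpull : μ[B.indicator (fun _ => (1 : ℝ)) * μ⟦t | m'⟧ | m'] =ᵐ[μ] μ⟦B ∩ t | m'⟧ :=
    (condExp_mul_of_stronglyMeasurable_right stronglyMeasurable_condExp hBt
      (hint (hm₁ B hB))).trans ((condIndep_iff m' m₁ m₂ hm' hm₁ hm₂ μ).mp h B t hB ht).symm
  calc ∫ ω in G ∩ B, (μ⟦t | m'⟧) ω ∂μ
      = ∫ ω in G, (B.indicator (fun _ => (1 : ℝ)) * μ⟦t | m'⟧) ω ∂μ := by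
        rw [← indicator_eq_indicator_one_mul, setIntegral_indicator (hm₁ B hB)]
    _ = ∫ ω in G, (μ⟦B ∩ t | m'⟧) ω ∂μ := by
        rw [← setIntegral_condExp hm' hBt hG]
        exact setIntegral_congr_ae (hm' G hG) (hpull.mono fun ω h _ => h)
    _ = ∫ ω in G ∩ B, t.indicator (fun _ => (1 : ℝ)) ω ∂μ := by
        rw [setIntegral_condExp hm' (hint ((hm₁ B hB).inter (hm₂ t ht))) hG,
          ← indicator_indicator, setIntegral_indicator (hm₁ B hB)]

section CondExp

variable {Ω : Type*} {m mΩ : MeasurableSpace Ω} {μ : Measure Ω} [IsFiniteMeasure μ] {t : Set Ω}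

theorem condExp_indicator_compl (hm : m ≤ mΩ) (ht : MeasurableSet t) :
    μ⟦tᶜ | m⟧ =ᵐ[μ] 1 - μ⟦t | m⟧ := by
  rw [indicator_compl]
  filter_upwards [condExp_sub (integrable_const (1 : ℝ))
    ((integrable_const (1 : ℝ)).indicator ht) m] with ω h
  rw [h, condExp_const hm]
  rfl

theorem condExp_indicator_div_eq {p Y : Ω → ℝ} (ht : MeasurableSet t) (hpm : Measurable[m] p)
    (hYm : Measurable[m] Y) (hp : μ⟦t | m⟧ =ᵐ[μ] p) (hp0 : ∀ᵐ ω ∂μ, p ω ≠ 0)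
    (hint : Integrable (t.indicator fun ω => Y ω / p ω) μ) :
    μ[t.indicator (fun ω => Y ω / p ω) | m] =ᵐ[μ] Y := by
  rw [indicator_eq_indicator_one_mul] at hint ⊢
  filter_upwards [condExp_mul_of_stronglyMeasurable_right (g := fun ω => Y ω / p ω)
    (hYm.div hpm).stronglyMeasurable hint ((integrable_const (1 : ℝ)).indicator ht), hp, hp0]
    with ω hpull hpω hp0ω
  rw [hpull, Pi.mul_apply, hpω, mul_div_cancel₀ _ hp0ω]

end CondExp

theorem condExp_ipwPseudo_eq_sub {Ω 𝓧 : Type*} {m mΩ : MeasurableSpace Ω} [MeasurableSpace 𝓧]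
    {P : Measure Ω} [IsFiniteMeasure P] (hm : m ≤ mΩ) {X : Ω → 𝓧} {A Y0 Y1 Y : Ω → ℝ}
    {pr : 𝓧 → ℝ} (hA : Measurable A) (hA01 : ∀ ω, A ω = 0 ∨ A ω = 1)
    (hYdef : ∀ ω, Y ω = A ω * Y1 ω + (1 - A ω) * Y0 ω) (hpr0 : ∀ x, pr x ≠ 0)
    (hpr1 : ∀ x, pr x ≠ 1) (hprm : Measurable[m] fun ω => pr (X ω)) (hY0 : Measurable[m] Y0)
    (hY1 : Measurable[m] Y1) (hprA : P⟦A ⁻¹' {1} | m⟧ =ᵐ[P] fun ω => pr (X ω))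
    (hI : Integrable (ipwPseudo A Y X pr) P) :
    P[ipwPseudo A Y X pr | m] =ᵐ[P] Y1 - Y0 := by
  set T := A ⁻¹' {1}
  have hT : MeasurableSet T := hA (measurableSet_singleton 1)
  have hA0 : ∀ ω ∈ Tᶜ, A ω = 0 := fun ω hω => (hA01 ω).resolve_right hω
  have hTc : P⟦Tᶜ | m⟧ =ᵐ[P] fun ω => 1 - pr (X ω) :=
    (condExp_indicator_compl hm hT).trans (hprA.mono fun ω h => by simp [h])
  have htreated : P[T.indicator (ipwPseudo A Y X pr) | m] =ᵐ[P] Y1 := by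
    have hAY : T.indicator (ipwPseudo A Y X pr) = T.indicator fun ω => Y1 ω / pr (X ω) :=
      indicator_congr fun ω (hω : A ω = 1) => by simp [ipwPseudo, hYdef, hω]
    have hint := hI.indicator hT
    rw [hAY] at hint ⊢
    exact condExp_indicator_div_eq hT hprm hY1 hprA (.of_forall fun ω => hpr0 (X ω)) hint
  have hcontrol : P[Tᶜ.indicator (ipwPseudo A Y X pr) | m] =ᵐ[P] -Y0 := by
    have hAY : Tᶜ.indicator (ipwPseudo A Y X pr) =
        Tᶜ.indicator fun ω => -Y0 ω / (1 - pr (X ω)) :=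
      indicator_congr fun ω hω => by simp [ipwPseudo, hYdef, hA0 ω hω, neg_div]
    have hint := hI.indicator hT.compl
    rw [hAY] at hint ⊢
    exact condExp_indicator_div_eq hT.compl (measurable_const.sub hprm) hY0.neg hTc
      (.of_forall fun ω => sub_ne_zero.2 (hpr1 (X ω)).symm) hint
  rw [← indicator_self_add_compl T (ipwPseudo A Y X pr)]
  filter_upwards [condExp_add (hI.indicator hT) (hI.indicator hT.compl) m, htreated, hcontrol]
    with ω hadd h1 h0
  rw [hadd, Pi.add_apply, h1, h0, Pi.neg_apply, Pi.sub_apply, sub_eq_add_neg]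

end

theorem stmt2_general {Ω 𝓧 : Type*} [MeasurableSpace Ω] [StandardBorelSpace Ω]
    [MeasurableSpace 𝓧]
    (P : Measure Ω) [IsProbabilityMeasure P]
    (X : Ω → 𝓧) (hX : Measurable X)
    (A Y0 Y1 Y : Ω → ℝ) (hA : Measurable A) (hY0 : Measurable Y0) (hY1 : Measurable Y1)
    (hA01 : ∀ ω, A ω = 0 ∨ A ω = 1)
    (hYdef : ∀ ω, Y ω = A ω * Y1 ω + (1 - A ω) * Y0 ω)
    (pr : 𝓧 → ℝ) (hprm : Measurable pr) (hpr : ∀ x, 0 < pr x ∧ pr x < 1)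
    (hprCE : (fun ω => pr (X ω)) =ᵐ[P] P[A | MeasurableSpace.comap X inferInstance])
    (hCE : CondIndepFun (MeasurableSpace.comap X inferInstance) hX.comap_le
      (fun ω => (Y0 ω, Y1 ω)) A P)
    (hI : Integrable (fun ω => ipwPseudo A Y X pr ω) P) :
    P[fun ω => ipwPseudo A Y X pr ω | MeasurableSpace.comap X inferInstance]
      =ᵐ[P] P[fun ω => Y1 ω - Y0 ω | MeasurableSpace.comap X inferInstance] := by
  set Z : Ω → ℝ × ℝ := fun ω => (Y0 ω, Y1 ω)
  have hZ : Measurable Z := hY0.prodMk hY1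
  have hle : MeasurableSpace.comap X inferInstance ⊔ MeasurableSpace.comap Z inferInstance ≤
      ‹MeasurableSpace Ω› := sup_le hX.comap_le hZ.comap_le
  have hZ₂ : Measurable[MeasurableSpace.comap X inferInstance ⊔
      MeasurableSpace.comap Z inferInstance] Z := measurable_iff_comap_le.mpr le_sup_right
  have hA_indicator : (A ⁻¹' {1}).indicator (fun _ => (1 : ℝ)) = A := by
    ext ω; rcases hA01 ω with h | h <;> simp [h]
  have hpropensity : P⟦A ⁻¹' {1} | MeasurableSpace.comap X inferInstance ⊔
      MeasurableSpace.comap Z inferInstance⟧ =ᵐ[P] fun ω => pr (X ω) :=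
    (CondIndep.condExp_indicator_sup_eq hZ.comap_le hA.comap_le hCE
      ⟨{1}, measurableSet_singleton 1, rfl⟩).trans (by rw [hA_indicator]; exact hprCE.symm)
  have hipw := condExp_ipwPseudo_eq_sub hle hA hA01 hYdef (fun x => (hpr x).1.ne')
    (fun x => (hpr x).2.ne) (hprm.comp ((comap_measurable X).mono le_sup_left le_rfl))
    (measurable_fst.comp hZ₂) (measurable_snd.comp hZ₂) hpropensity hI
  exact (condExp_condExp_of_le le_sup_left hle).symm.trans (condExp_congr_ae hipw)

/-- the IPW pseudo-outcome identifies the conditional treatment effect: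
`E[A·Y/π(X) − (1−A)·Y/(1−π(X)) | σ(X)] = E[Y¹ − Y⁰ | σ(X)]` a.s. -/
theorem stmt2 {Ω 𝓧 : Type*} [MeasurableSpace Ω] [StandardBorelSpace Ω]
    [MeasurableSpace 𝓧]
    (P : Measure Ω) [IsProbabilityMeasure P]
    (X : Ω → 𝓧) (hX : Measurable X)
    (A Y0 Y1 Y : Ω → ℝ) (hA : Measurable A) (hY0 : Measurable Y0) (hY1 : Measurable Y1)
    (hA01 : ∀ ω, A ω = 0 ∨ A ω = 1)
    (hYdef : ∀ ω, Y ω = A ω * Y1 ω + (1 - A ω) * Y0 ω)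
    (pr : 𝓧 → ℝ) (hprm : Measurable pr) (hpr : ∀ x, 0 < pr x ∧ pr x < 1)
    (hprCE : (fun ω => pr (X ω)) =ᵐ[P] P[A | MeasurableSpace.comap X inferInstance])
    (hCE : CondIndepFun (MeasurableSpace.comap X inferInstance) hX.comap_le
      (fun ω => (Y0 ω, Y1 ω)) A P)
    (hI : Integrable (fun ω => ipwPseudo A Y X pr ω) P)
    (hI' : Integrable (fun ω => Y1 ω - Y0 ω) P) :
    P[fun ω => ipwPseudo A Y X pr ω | MeasurableSpace.comap X inferInstance]
      =ᵐ[P] P[fun ω => Y1 ω - Y0 ω | MeasurableSpace.comap X inferInstance] :=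
  stmt2_general P X hX A Y0 Y1 Y hA hY0 hY1 hA01 hYdef pr hprm hpr hprCE hCE hI
end

section
/- Let ω : 𝒳 → ℝ be measurable with ω ≥ 0, and let G̃ be a σ(V)-measurable real random variable satisfying G̃·E[ω(X) | σ(V)] = E[ω(X)·(Y¹−Y⁰) | σ(V)] almost surely (the weighted conditional treatment effect E{ω(X)(Y¹−Y⁰)|V}/E{ω(X)|V}). Then for every measurable g : 𝒱 → ℝ (with all expectations below finite), E[ω(X)·((Y¹−Y⁰) − g(V))²] = E[ω(X)·((Y¹−Y⁰) − G̃)²] + E[E[ω(X) | σ(V)]·(G̃ − g(V))²]; in particular G̃ minimizes the ω-weighted population risk g ↦ E[ω(X)·((Y¹−Y⁰) − g(V))²]. -/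
/-!
With `D = Y¹ - Y⁰`, `W = ω(X)` and `h = g(V)`, expand
`(D - h)² = (D - G̃)² + 2 (G̃ - h)(D - G̃) + (G̃ - h)²`. The defining equation of `G̃` says
exactly that `E[W (D - G̃) | σ(V)] = 0`, so the cross term integrates to zero against the
`σ(V)`-measurable factor `G̃ - h`; in the last term `(G̃ - h)²` is `σ(V)`-measurable and pulls out
of `E[W · | σ(V)]`. All products that appear are integrable because `2 |a b| ≤ a² + b²`.
-/

open MeasureTheory ProbabilityTheory

section WeightedRisk

variable {Ω : Type*} {m mΩ : MeasurableSpace Ω} {μ : Measure Ω}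

theorem integrable_mul_mul_of_integrable_mul_sq {W a b : Ω → ℝ} (hW : ∀ᵐ ω ∂μ, 0 ≤ W ω)
    (ha : Integrable (fun ω => W ω * a ω ^ 2) μ) (hb : Integrable (fun ω => W ω * b ω ^ 2) μ)
    (hab : AEStronglyMeasurable (fun ω => W ω * a ω * b ω) μ) :
    Integrable (fun ω => W ω * a ω * b ω) μ := by
  refine ((ha.add hb).div_const 2).mono' hab ?_
  filter_upwards [hW] with ω hWω
  rw [Real.norm_eq_abs, abs_mul, abs_mul, abs_of_nonneg hWω]
  have h2ab : 2 * (|a ω| * |b ω|) ≤ a ω ^ 2 + b ω ^ 2 := by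
    nlinarith [sq_nonneg (|a ω| - |b ω|), sq_abs (a ω), sq_abs (b ω)]
  simp only [Pi.add_apply]
  nlinarith [mul_le_mul_of_nonneg_left h2ab hWω]

theorem integral_mul_eq_integral_mul_condExp (hm : m ≤ mΩ) [SigmaFinite (μ.trim hm)]
    {f g : Ω → ℝ} (hf : StronglyMeasurable[m] f) (hfg : Integrable (f * g) μ)
    (hg : Integrable g μ) : ∫ ω, f ω * g ω ∂μ = ∫ ω, f ω * (μ[g | m]) ω ∂μ :=
  (integral_condExp hm).symm.trans
    (integral_congr_ae (condExp_mul_of_stronglyMeasurable_left hf hfg hg))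

theorem condExp_mul_sub_ae_eq_zero {W D G : Ω → ℝ} (hGm : StronglyMeasurable[m] G)
    (hW : Integrable W μ) (hWD : Integrable (fun ω => W ω * D ω) μ)
    (hWDG : Integrable (fun ω => W ω * (D ω - G ω)) μ)
    (hG : (fun ω => G ω * (μ[W | m]) ω) =ᵐ[μ] μ[fun ω => W ω * D ω | m]) :
    μ[fun ω => W ω * (D ω - G ω) | m] =ᵐ[μ] 0 := by
  have hsplit : (fun ω => W ω * (D ω - G ω)) = (fun ω => W ω * D ω) - G * W := by
    ext ω; simp only [Pi.sub_apply, Pi.mul_apply]; ring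
  have hGW : Integrable (G * W) μ := by
    simpa only [hsplit, sub_sub_cancel] using hWD.sub hWDG
  filter_upwards [hsplit ▸ condExp_sub hWD hGW m,
    condExp_mul_of_stronglyMeasurable_left hGm hGW hW, hG] with ω hsub hpull hGω
  simp only [hsub, Pi.sub_apply, hpull, Pi.mul_apply, hGω, sub_self, Pi.zero_apply]

theorem integral_mul_mul_sub_eq_zero (hm : m ≤ mΩ) [SigmaFinite (μ.trim hm)]
    {W D G f : Ω → ℝ} (hf : StronglyMeasurable[m] f) (hGm : StronglyMeasurable[m] G)
    (hW : Integrable W μ) (hWD : Integrable (fun ω => W ω * D ω) μ)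
    (hWDG : Integrable (fun ω => W ω * (D ω - G ω)) μ)
    (hfWDG : Integrable (fun ω => f ω * (W ω * (D ω - G ω))) μ)
    (hG : (fun ω => G ω * (μ[W | m]) ω) =ᵐ[μ] μ[fun ω => W ω * D ω | m]) :
    ∫ ω, f ω * (W ω * (D ω - G ω)) ∂μ = 0 := by
  rw [integral_mul_eq_integral_mul_condExp hm hf hfWDG hWDG]
  refine integral_eq_zero_of_ae ?_
  filter_upwards [condExp_mul_sub_ae_eq_zero hGm hW hWD hWDG hG] with ω hω
  simp [hω]

theorem integral_mul_sub_sq_eq_add (hm : m ≤ mΩ) [SigmaFinite (μ.trim hm)]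
    {W D G h : Ω → ℝ} (hW₀ : ∀ᵐ ω ∂μ, 0 ≤ W ω) (hW : Integrable W μ)
    (hD : AEStronglyMeasurable D μ) (hWD : Integrable (fun ω => W ω * D ω) μ)
    (hGm : StronglyMeasurable[m] G) (hhm : StronglyMeasurable[m] h)
    (hG : (fun ω => G ω * (μ[W | m]) ω) =ᵐ[μ] μ[fun ω => W ω * D ω | m])
    (hWDh : Integrable (fun ω => W ω * (D ω - h ω) ^ 2) μ)
    (hWDG : Integrable (fun ω => W ω * (D ω - G ω) ^ 2) μ) :
    ∫ ω, W ω * (D ω - h ω) ^ 2 ∂μ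
      = ∫ ω, W ω * (D ω - G ω) ^ 2 ∂μ + ∫ ω, (μ[W | m]) ω * (G ω - h ω) ^ 2 ∂μ := by
  have hWa : AEStronglyMeasurable W μ := hW.aestronglyMeasurable
  have hGa : AEStronglyMeasurable G μ := (hGm.mono hm).aestronglyMeasurable
  have hha : AEStronglyMeasurable h μ := (hhm.mono hm).aestronglyMeasurable
  have hGhm : StronglyMeasurable[m] (fun ω => G ω - h ω) := hGm.sub hhm
  have hWDG₁ : Integrable (fun ω => W ω * (D ω - G ω)) μ := by
    simpa using integrable_mul_mul_of_integrable_mul_sq (a := 1) hW₀ (by simpa using hW) hWDG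
      (by fun_prop)
  have hWGh : Integrable (fun ω => W ω * (G ω - h ω) ^ 2) μ := by
    -- `G - h = (D - h) - (D - G)`
    have hcross := integrable_mul_mul_of_integrable_mul_sq hW₀ hWDh hWDG (by fun_prop)
    refine ((hWDh.sub (hcross.const_mul 2)).add hWDG).congr (ae_of_all _ fun ω => ?_)
    simp only [Pi.add_apply, Pi.sub_apply]
    ring
  have hWDGh : Integrable (fun ω => (G ω - h ω) * (W ω * (D ω - G ω))) μ := by
    refine (integrable_mul_mul_of_integrable_mul_sq hW₀ hWDG hWGh (by fun_prop)).congr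
      (ae_of_all _ fun ω => ?_)
    ring
  have hWGh' : Integrable (fun ω => (G ω - h ω) ^ 2 * W ω) μ :=
    hWGh.congr (ae_of_all _ fun ω => mul_comm _ _)
  have horth := integral_mul_mul_sub_eq_zero hm hGhm hGm hW hWD hWDG₁ hWDGh hG
  have hpull : ∫ ω, (G ω - h ω) ^ 2 * W ω ∂μ = ∫ ω, (μ[W | m]) ω * (G ω - h ω) ^ 2 ∂μ :=
    (integral_mul_eq_integral_mul_condExp hm (hGhm.pow 2) hWGh' hW).trans
      (integral_congr_ae (ae_of_all _ fun ω => mul_comm _ _))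
  calc ∫ ω, W ω * (D ω - h ω) ^ 2 ∂μ
      = ∫ ω, W ω * (D ω - G ω) ^ 2 + 2 * ((G ω - h ω) * (W ω * (D ω - G ω)))
          + (G ω - h ω) ^ 2 * W ω ∂μ := integral_congr_ae (ae_of_all _ fun ω => by ring)
    _ = ∫ ω, W ω * (D ω - G ω) ^ 2 ∂μ
          + 2 * ∫ ω, (G ω - h ω) * (W ω * (D ω - G ω)) ∂μ
          + ∫ ω, (G ω - h ω) ^ 2 * W ω ∂μ := by
      have hcross₂ := hWDGh.const_mul 2
      have hsum : Integrable (fun ω => W ω * (D ω - G ω) ^ 2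
          + 2 * ((G ω - h ω) * (W ω * (D ω - G ω)))) μ := hWDG.add hcross₂
      rw [integral_add hsum hWGh', integral_add hWDG hcross₂, integral_const_mul]
    _ = _ := by rw [horth, hpull, mul_zero, add_zero]

end WeightedRisk

theorem stmt4_general {Ω 𝓧 𝓥 : Type*} [MeasurableSpace Ω] [MeasurableSpace 𝓧] [MeasurableSpace 𝓥]
    (P : Measure Ω) [IsProbabilityMeasure P]
    (X : Ω → 𝓧) (hX : Measurable X) (v : 𝓧 → 𝓥) (hv : Measurable v)
    (Y0 Y1 : Ω → ℝ) (hY0 : Measurable Y0) (hY1 : Measurable Y1)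
    (wt : 𝓧 → ℝ) (hwtnn : ∀ x, 0 ≤ wt x)
    (G : Ω → ℝ)
    (hGmeas : Measurable[MeasurableSpace.comap (fun ω => v (X ω)) inferInstance] G)
    (hG : (fun ω => G ω *
        (P[fun ω' => wt (X ω') | MeasurableSpace.comap (fun ω' => v (X ω')) inferInstance]) ω)
      =ᵐ[P]
      P[fun ω' => wt (X ω') * (Y1 ω' - Y0 ω') |
        MeasurableSpace.comap (fun ω' => v (X ω')) inferInstance])
    (hIw : Integrable (fun ω => wt (X ω)) P)
    (hIwY : Integrable (fun ω => wt (X ω) * (Y1 ω - Y0 ω)) P)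
    (g : 𝓥 → ℝ) (hg : Measurable g)
    (hI1 : Integrable (fun ω => wt (X ω) * ((Y1 ω - Y0 ω) - g (v (X ω))) ^ 2) P)
    (hI2 : Integrable (fun ω => wt (X ω) * ((Y1 ω - Y0 ω) - G ω) ^ 2) P) :
    (∫ ω, wt (X ω) * ((Y1 ω - Y0 ω) - g (v (X ω))) ^ 2 ∂P
      = ∫ ω, wt (X ω) * ((Y1 ω - Y0 ω) - G ω) ^ 2 ∂P
        + ∫ ω,
            (P[fun ω' => wt (X ω') |
              MeasurableSpace.comap (fun ω' => v (X ω')) inferInstance]) ω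
              * (G ω - g (v (X ω))) ^ 2 ∂P)
    ∧ ∫ ω, wt (X ω) * ((Y1 ω - Y0 ω) - G ω) ^ 2 ∂P
        ≤ ∫ ω, wt (X ω) * ((Y1 ω - Y0 ω) - g (v (X ω))) ^ 2 ∂P := by
  set V : Ω → 𝓥 := fun ω => v (X ω)
  have hm : MeasurableSpace.comap V inferInstance ≤ ‹MeasurableSpace Ω› :=
    (hv.comp hX).comap_le
  have hgV : Measurable[MeasurableSpace.comap V inferInstance] (fun ω => g (V ω)) :=
    hg.comp (comap_measurable V)
  have hdecomp := integral_mul_sub_sq_eq_add hm (W := fun ω => wt (X ω))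
    (D := fun ω => Y1 ω - Y0 ω) (ae_of_all _ fun ω => hwtnn (X ω)) hIw
    (hY1.sub hY0).aestronglyMeasurable hIwY hGmeas.stronglyMeasurable hgV.stronglyMeasurable
    hG hI1 hI2
  refine ⟨hdecomp, hdecomp ▸ le_add_of_nonneg_right (integral_nonneg_of_ae ?_)⟩
  filter_upwards [condExp_nonneg (m := MeasurableSpace.comap V inferInstance)
    (ae_of_all P fun ω => hwtnn (X ω))] with ω hω
  exact mul_nonneg hω (sq_nonneg _)

/-- for a nonnegative weight `ω(X)`, the weighted conditional treatment effect
`G̃` (characterized by `G̃·E[ω(X)|σ(V)] = E[ω(X)(Y¹−Y⁰)|σ(V)]` a.s.) decomposes the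
`ω`-weighted risk and hence minimizes it. -/
theorem stmt4 {Ω 𝓧 𝓥 : Type*} [MeasurableSpace Ω] [MeasurableSpace 𝓧] [MeasurableSpace 𝓥]
    (P : Measure Ω) [IsProbabilityMeasure P]
    (X : Ω → 𝓧) (hX : Measurable X) (v : 𝓧 → 𝓥) (hv : Measurable v)
    (Y0 Y1 : Ω → ℝ) (hY0 : Measurable Y0) (hY1 : Measurable Y1)
    (wt : 𝓧 → ℝ) (hwt : Measurable wt) (hwtnn : ∀ x, 0 ≤ wt x)
    (G : Ω → ℝ)
    (hGmeas : Measurable[MeasurableSpace.comap (fun ω => v (X ω)) inferInstance] G)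
    (hG : (fun ω => G ω *
        (P[fun ω' => wt (X ω') | MeasurableSpace.comap (fun ω' => v (X ω')) inferInstance]) ω)
      =ᵐ[P]
      P[fun ω' => wt (X ω') * (Y1 ω' - Y0 ω') |
        MeasurableSpace.comap (fun ω' => v (X ω')) inferInstance])
    (hIw : Integrable (fun ω => wt (X ω)) P)
    (hIwY : Integrable (fun ω => wt (X ω) * (Y1 ω - Y0 ω)) P)
    (g : 𝓥 → ℝ) (hg : Measurable g)
    (hI1 : Integrable (fun ω => wt (X ω) * ((Y1 ω - Y0 ω) - g (v (X ω))) ^ 2) P)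
    (hI2 : Integrable (fun ω => wt (X ω) * ((Y1 ω - Y0 ω) - G ω) ^ 2) P)
    (hI3 : Integrable (fun ω =>
      (P[fun ω' => wt (X ω') | MeasurableSpace.comap (fun ω' => v (X ω')) inferInstance]) ω
        * (G ω - g (v (X ω))) ^ 2) P)
    (hI4 : Integrable (fun ω => wt (X ω) * ((Y1 ω - Y0 ω) - G ω) * (G ω - g (v (X ω)))) P) :
    (∫ ω, wt (X ω) * ((Y1 ω - Y0 ω) - g (v (X ω))) ^ 2 ∂P
      = ∫ ω, wt (X ω) * ((Y1 ω - Y0 ω) - G ω) ^ 2 ∂P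
        + ∫ ω,
            (P[fun ω' => wt (X ω') |
              MeasurableSpace.comap (fun ω' => v (X ω')) inferInstance]) ω
              * (G ω - g (v (X ω))) ^ 2 ∂P)
    ∧ ∫ ω, wt (X ω) * ((Y1 ω - Y0 ω) - G ω) ^ 2 ∂P
        ≤ ∫ ω, wt (X ω) * ((Y1 ω - Y0 ω) - g (v (X ω))) ^ 2 ∂P :=
  stmt4_general P X hX v hv Y0 Y1 hY0 hY1 wt hwtnn G hGmeas hG hIw hIwY g hg hI1 hI2
end

section
/- The conditional average treatment effect is identified by the difference of the outcome regressions: Q¹(X) − Q⁰(X) = E[Y¹ − Y⁰ | σ(X)] P-almost surely. -/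
/-! Write `m = σ(X)` and `m' = σ(X) ⊔ σ(Y⁰, Y¹)`. Conditional exchangeability says that
`E[A | m'] = E[A | m] = π(X)`; this is checked on the π-system of sets `t ∩ u` with
`t ∈ m`, `u ∈ σ(Y⁰, Y¹)`. Since the residual `Y¹ - Q¹(X)` is `m'`-measurable, pulling it out
and using the tower property gives `E[π(X) (Y¹ - Q¹(X)) | m] = E[A (Y - Q¹(X)) | m] = 0`, and
likewise `E[(1 - π(X)) (Y⁰ - Q⁰(X)) | m] = 0`. The residuals need not be integrable, so we
multiply by the bounded weight `w = π(1 - π)`: the identity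
`w (Q¹ - Q⁰) = w (Y¹ - Y⁰) - (1 - π) π (Y¹ - Q¹) + π (1 - π) (Y⁰ - Q⁰)` yields
`w (Q¹ - Q⁰)(X) = w E[Y¹ - Y⁰ | m]`, and `w > 0` cancels. -/

open MeasureTheory ProbabilityTheory Set Filter

theorem IsPiSystem.image2_inter_s5 {α : Type*} {C D : Set (Set α)} (hC : IsPiSystem C)
    (hD : IsPiSystem D) : IsPiSystem (image2 (· ∩ ·) C D) := by
  rintro _ ⟨s₁, hs₁, t₁, ht₁, rfl⟩ _ ⟨s₂, hs₂, t₂, ht₂, rfl⟩ hne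
  refine ⟨s₁ ∩ s₂, hC _ hs₁ _ hs₂ (hne.mono fun x hx => ⟨hx.1.1, hx.2.1⟩),
    t₁ ∩ t₂, hD _ ht₁ _ ht₂ (hne.mono fun x hx => ⟨hx.1.2, hx.2.2⟩), ?_⟩
  exact inter_inter_inter_comm _ _ _ _

theorem MeasurableSpace.sup_eq_generateFrom_image2_inter {α : Type*}
    (m₁ m₂ : MeasurableSpace α) :
    m₁ ⊔ m₂ =
      generateFrom (image2 (· ∩ ·) {s | MeasurableSet[m₁] s} {t | MeasurableSet[m₂] t}) := by
  refine le_antisymm (sup_le ?_ ?_) (generateFrom_le ?_)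
  · exact fun s hs => measurableSet_generateFrom ⟨s, hs, univ, MeasurableSet.univ, inter_univ s⟩
  · exact fun t ht => measurableSet_generateFrom ⟨univ, MeasurableSet.univ, t, ht, univ_inter t⟩
  · rintro _ ⟨s, hs, t, ht, rfl⟩
    exact MeasurableSet.inter (le_sup_left (b := m₂) s hs) (le_sup_right (a := m₁) t ht)

theorem setIntegral_eq_setIntegral_of_isPiSystem {α E : Type*} [NormedAddCommGroup E]
    [NormedSpace ℝ E] {m m₀ : MeasurableSpace α} {μ : Measure α} (hm : m ≤ m₀)
    {C : Set (Set α)} (h_eq : m = MeasurableSpace.generateFrom C) (h_inter : IsPiSystem C)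
    {f g : α → E} (hf : Integrable f μ) (hg : Integrable g μ)
    (h_univ : ∫ x, f x ∂μ = ∫ x, g x ∂μ)
    (basic : ∀ t ∈ C, ∫ x in t, f x ∂μ = ∫ x in t, g x ∂μ) {t : Set α}
    (ht : MeasurableSet[m] t) : ∫ x in t, f x ∂μ = ∫ x in t, g x ∂μ := by
  induction t, ht using MeasurableSpace.induction_on_inter h_eq h_inter with
  | empty => simp
  | basic t ht => exact basic t ht
  | compl t ht h => rw [setIntegral_compl (hm t ht) hf, setIntegral_compl (hm t ht) hg, h, h_univ]
  | iUnion s hdisj hs h =>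
    rw [integral_iUnion (fun i => hm _ (hs i)) hdisj hf.integrableOn,
      integral_iUnion (fun i => hm _ (hs i)) hdisj hg.integrableOn]
    exact tsum_congr h

theorem integrable_mul_and_condExp_mul_ae_eq_zero {Ω : Type*} {m mΩ : MeasurableSpace Ω}
    {μ : Measure Ω} (hm : m ≤ mΩ) {c U : Ω → ℝ} {C : ℝ}
    (hc : StronglyMeasurable[m] c) (hcC : ∀ ω, ‖c ω‖ ≤ C) (hU : Integrable U μ)
    (h : μ[U | m] =ᵐ[μ] 0) : Integrable (c * U) μ ∧ μ[c * U | m] =ᵐ[μ] 0 := by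
  have hcU : Integrable (c * U) μ :=
    hU.bdd_mul (hc.mono hm).aestronglyMeasurable (ae_of_all _ hcC)
  refine ⟨hcU, (condExp_mul_of_stronglyMeasurable_left hc hcU hU).trans ?_⟩
  filter_upwards [h] with ω hω
  simp [hω]

section

variable {Ω : Type*} {m m' m₁ m₂ mΩ : MeasurableSpace Ω} {μ : Measure Ω} [IsFiniteMeasure μ]

theorem condExp_indicator_sup_ae_eq_of_condIndep [StandardBorelSpace Ω] (hm : m ≤ mΩ)
    (hm₁ : m₁ ≤ mΩ) (hm₂ : m₂ ≤ mΩ) (h : CondIndep m m₁ m₂ hm μ) {a : Set Ω}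
    (ha : MeasurableSet[m₂] a) : μ⟦a | m ⊔ m₁⟧ =ᵐ[μ] μ⟦a | m⟧ := by
  have hsup : m ⊔ m₁ ≤ mΩ := sup_le hm hm₁
  have h1 : ∀ {s}, MeasurableSet s → Integrable (s.indicator fun _ => (1 : ℝ)) μ :=
    fun hs => (integrable_const 1).indicator hs
  refine (ae_eq_condExp_of_forall_setIntegral_eq hsup (h1 (hm₂ a ha))
    (fun _ _ _ => integrable_condExp.integrableOn) (fun s hs _ => ?_)
    (stronglyMeasurable_condExp.mono (le_sup_left : m ≤ m ⊔ m₁)).aestronglyMeasurable).symm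
  refine setIntegral_eq_setIntegral_of_isPiSystem hsup
    (MeasurableSpace.sup_eq_generateFrom_image2_inter m m₁)
    ((@MeasurableSpace.isPiSystem_measurableSet _ m).image2_inter_s5
      (@MeasurableSpace.isPiSystem_measurableSet _ m₁)) integrable_condExp
    (h1 (hm₂ a ha)) (integral_condExp hm) ?_ hs
  rintro _ ⟨t, ht, u, hu, rfl⟩
  have hu' : MeasurableSet u := hm₁ u hu
  have hind : ∀ f : Ω → ℝ, u.indicator f = u.indicator (fun _ => (1 : ℝ)) * f := fun f => by
    ext x; by_cases hx : x ∈ u <;> simp [hx]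
  have hI : Integrable (u.indicator (fun _ => (1 : ℝ)) * μ⟦a | m⟧) μ :=
    hind _ ▸ integrable_condExp.indicator hu'
  have hpull : μ[u.indicator (fun _ => (1 : ℝ)) * μ⟦a | m⟧ | m] =ᵐ[μ] μ⟦u | m⟧ * μ⟦a | m⟧ :=
    condExp_mul_of_stronglyMeasurable_right stronglyMeasurable_condExp hI (h1 hu')
  have hprod := (condIndep_iff m m₁ m₂ hm hm₁ hm₂ μ).mp h u a hu ha
  calc ∫ x in t ∩ u, (μ⟦a | m⟧) x ∂μ
      = ∫ x in t, (u.indicator (fun _ => (1 : ℝ)) * μ⟦a | m⟧) x ∂μ := by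
        rw [← setIntegral_indicator hu', hind]
    _ = ∫ x in t, (μ⟦u ∩ a | m⟧) x ∂μ := by
        rw [← setIntegral_condExp hm hI ht]
        exact setIntegral_congr_ae (hm t ht) <| by
          filter_upwards [hpull, hprod] with x h₁ h₂ _ using h₁.trans h₂.symm
    _ = ∫ x in t ∩ u, (a.indicator fun _ => (1 : ℝ)) x ∂μ := by
        rw [setIntegral_condExp hm (h1 (hu'.inter (hm₂ a ha))) ht,
          ← setIntegral_indicator hu', indicator_indicator]

theorem condExp_sup_ae_eq_of_condIndep_comap [StandardBorelSpace Ω] (hm : m ≤ mΩ)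
    (hm₁ : m₁ ≤ mΩ) {A : Ω → ℝ} (hA : Measurable A) (hA01 : ∀ ω, A ω = 0 ∨ A ω = 1)
    (h : CondIndep m m₁ (MeasurableSpace.comap A inferInstance) hm μ) :
    μ[A | m ⊔ m₁] =ᵐ[μ] μ[A | m] := by
  have hA_eq : A = (A ⁻¹' {1}).indicator fun _ => 1 := by
    ext ω; rcases hA01 ω with h | h <;> simp [h]
  rw [hA_eq]
  exact condExp_indicator_sup_ae_eq_of_condIndep hm hm₁ hA.comap_le h
    ⟨{1}, measurableSet_singleton 1, rfl⟩

theorem integrable_mul_and_condExp_mul_ae_eq_of_condExp_ae_eq (hmm' : m ≤ m') (hm' : m' ≤ mΩ)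
    {V A p : Ω → ℝ} (hV : StronglyMeasurable[m'] V) (hA : Integrable A μ)
    (hVA : Integrable (V * A) μ) (hp : μ[A | m'] =ᵐ[μ] p) :
    Integrable (V * p) μ ∧ μ[V * p | m] =ᵐ[μ] μ[V * A | m] := by
  have hpull : μ[V * A | m'] =ᵐ[μ] V * p :=
    (condExp_mul_of_stronglyMeasurable_left hV hVA hA).trans (EventuallyEq.rfl.mul hp)
  exact ⟨integrable_condExp.congr hpull,
    (condExp_congr_ae hpull.symm).trans (condExp_condExp_of_le hmm' hm')⟩

theorem sub_ae_eq_condExp_sub_of_condExp_mul_eq_zero (hm : m ≤ mΩ) {p q₀ q₁ Y₀ Y₁ : Ω → ℝ}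
    (hp : StronglyMeasurable[m] p) (hp01 : ∀ ω, 0 < p ω ∧ p ω < 1)
    (hq₀ : StronglyMeasurable[m] q₀) (hq₁ : StronglyMeasurable[m] q₁)
    (hY : Integrable (Y₁ - Y₀) μ) (hU₁ : Integrable ((Y₁ - q₁) * p) μ)
    (hU₀ : Integrable ((Y₀ - q₀) * (1 - p)) μ) (h₁ : μ[(Y₁ - q₁) * p | m] =ᵐ[μ] 0)
    (h₀ : μ[(Y₀ - q₀) * (1 - p) | m] =ᵐ[μ] 0) :
    q₁ - q₀ =ᵐ[μ] μ[Y₁ - Y₀ | m] := by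
  have hp' : StronglyMeasurable[m] (1 - p) := stronglyMeasurable_const.sub hp
  have hw : StronglyMeasurable[m] (p * (1 - p)) := hp.mul hp'
  have hp_le : ∀ ω, ‖p ω‖ ≤ 1 := fun ω => by
    rw [Real.norm_eq_abs, abs_le]; constructor <;> linarith [hp01 ω]
  have hp'_le : ∀ ω, ‖(1 - p) ω‖ ≤ 1 := fun ω => by
    rw [Pi.sub_apply, Pi.one_apply, Real.norm_eq_abs, abs_le]; constructor <;> linarith [hp01 ω]
  obtain ⟨hI₁, hz₁⟩ := integrable_mul_and_condExp_mul_ae_eq_zero hm hp' hp'_le hU₁ h₁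
  obtain ⟨hI₀, hz₀⟩ := integrable_mul_and_condExp_mul_ae_eq_zero hm hp hp_le hU₀ h₀
  have hIY : Integrable (p * (1 - p) * (Y₁ - Y₀)) μ :=
    hY.bdd_mul (hw.mono hm).aestronglyMeasurable <| ae_of_all _ fun ω => by
      rw [Pi.mul_apply, norm_mul]; exact mul_le_one₀ (hp_le ω) (norm_nonneg _) (hp'_le ω)
  have hdecomp : p * (1 - p) * (q₁ - q₀)
      = p * (1 - p) * (Y₁ - Y₀) - (1 - p) * ((Y₁ - q₁) * p) + p * ((Y₀ - q₀) * (1 - p)) := by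
    ext ω; simp only [Pi.mul_apply, Pi.sub_apply, Pi.add_apply]; ring
  have hweighted : p * (1 - p) * (q₁ - q₀) =ᵐ[μ] p * (1 - p) * μ[Y₁ - Y₀ | m] :=
    calc p * (1 - p) * (q₁ - q₀)
        = μ[p * (1 - p) * (q₁ - q₀) | m] :=
          (condExp_of_stronglyMeasurable hm (hw.mul (hq₁.sub hq₀))
            (hdecomp ▸ (hIY.sub hI₁).add hI₀)).symm
      _ =ᵐ[μ] μ[p * (1 - p) * (Y₁ - Y₀) | m] - μ[(1 - p) * ((Y₁ - q₁) * p) | m]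
            + μ[p * ((Y₀ - q₀) * (1 - p)) | m] := by
          rw [hdecomp]
          exact (condExp_add (hIY.sub hI₁) hI₀ m).trans
            ((condExp_sub hIY hI₁ m).add EventuallyEq.rfl)
      _ =ᵐ[μ] p * (1 - p) * μ[Y₁ - Y₀ | m] - 0 + 0 :=
          ((condExp_mul_of_stronglyMeasurable_left hw hIY hY).sub hz₁).add hz₀
      _ = p * (1 - p) * μ[Y₁ - Y₀ | m] := by rw [sub_zero, add_zero]
  filter_upwards [hweighted] with ω h
  have hw_ne : p ω * (1 - p ω) ≠ 0 := (mul_pos (hp01 ω).1 (sub_pos.2 (hp01 ω).2)).ne'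
  exact mul_left_cancel₀ hw_ne h

theorem sub_ae_eq_condExp_sub_of_condIndep [StandardBorelSpace Ω] (hm : m ≤ mΩ)
    (hm₁ : m₁ ≤ mΩ) {A Y Y₀ Y₁ p q₀ q₁ : Ω → ℝ} (hA : Measurable A) (hY₀ : Measurable[m₁] Y₀)
    (hY₁ : Measurable[m₁] Y₁) (hA01 : ∀ ω, A ω = 0 ∨ A ω = 1) (hY : Y = A * Y₁ + (1 - A) * Y₀)
    (hp : StronglyMeasurable[m] p) (hp01 : ∀ ω, 0 < p ω ∧ p ω < 1) (hpA : p =ᵐ[μ] μ[A | m])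
    (hCI : CondIndep m m₁ (MeasurableSpace.comap A inferInstance) hm μ)
    (hq₀ : StronglyMeasurable[m] q₀) (hq₁ : StronglyMeasurable[m] q₁)
    (h₁ : μ[A * (Y - q₁) | m] =ᵐ[μ] 0) (h₀ : μ[(1 - A) * (Y - q₀) | m] =ᵐ[μ] 0)
    (hIY : Integrable (Y₁ - Y₀) μ) (hI₁ : Integrable (A * (Y - q₁)) μ)
    (hI₀ : Integrable ((1 - A) * (Y - q₀)) μ) :
    q₁ - q₀ =ᵐ[μ] μ[Y₁ - Y₀ | m] := by
  have hsup : m ⊔ m₁ ≤ mΩ := sup_le hm hm₁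
  have hAint : Integrable A μ := .of_bound hA.aestronglyMeasurable 1 <|
    ae_of_all _ fun ω => by rcases hA01 ω with h | h <;> simp [h]
  have hπ₁ : μ[A | m ⊔ m₁] =ᵐ[μ] p :=
    (condExp_sup_ae_eq_of_condIndep_comap hm hm₁ hA hA01 hCI).trans hpA.symm
  have hπ₀ : μ[1 - A | m ⊔ m₁] =ᵐ[μ] 1 - p := by
    filter_upwards [condExp_sub (integrable_const 1) hAint (m ⊔ m₁), hπ₁] with ω h₁ h₂
    rw [Pi.sub_apply, condExp_const hsup, h₂] at h₁
    exact h₁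
  have hres₁ : A * (Y - q₁) = (Y₁ - q₁) * A := by
    ext ω; rcases hA01 ω with h | h <;> simp [hY, h]
  have hres₀ : (1 - A) * (Y - q₀) = (Y₀ - q₀) * (1 - A) := by
    ext ω; rcases hA01 ω with h | h <;> simp [hY, h]
  obtain ⟨hU₁, hU₁m⟩ := integrable_mul_and_condExp_mul_ae_eq_of_condExp_ae_eq le_sup_left hsup
    ((hY₁.mono le_sup_right le_rfl).stronglyMeasurable.sub (hq₁.mono le_sup_left)) hAint
    (hres₁ ▸ hI₁) hπ₁
  obtain ⟨hU₀, hU₀m⟩ := integrable_mul_and_condExp_mul_ae_eq_of_condExp_ae_eq le_sup_left hsup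
    ((hY₀.mono le_sup_right le_rfl).stronglyMeasurable.sub (hq₀.mono le_sup_left))
    ((integrable_const 1).sub hAint) (hres₀ ▸ hI₀) hπ₀
  exact sub_ae_eq_condExp_sub_of_condExp_mul_eq_zero hm hp hp01 hq₀ hq₁ hIY hU₁ hU₀
    (hU₁m.trans (hres₁ ▸ h₁)) (hU₀m.trans (hres₀ ▸ h₀))

end

/-- the CATE is identified by the difference of the outcome regressions:
`Q¹(X) − Q⁰(X) = E[Y¹ − Y⁰ | σ(X)]` a.s. -/
theorem stmt5 {Ω 𝓧 : Type*} [MeasurableSpace Ω] [StandardBorelSpace Ω]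
    [MeasurableSpace 𝓧]
    (P : Measure Ω) [IsProbabilityMeasure P]
    (X : Ω → 𝓧) (hX : Measurable X)
    (A Y0 Y1 Y : Ω → ℝ) (hA : Measurable A) (hY0 : Measurable Y0) (hY1 : Measurable Y1)
    (hA01 : ∀ ω, A ω = 0 ∨ A ω = 1)
    (hYdef : ∀ ω, Y ω = A ω * Y1 ω + (1 - A ω) * Y0 ω)
    (pr : 𝓧 → ℝ) (hprm : Measurable pr) (hpr : ∀ x, 0 < pr x ∧ pr x < 1)
    (hprCE : (fun ω => pr (X ω)) =ᵐ[P] P[A | MeasurableSpace.comap X inferInstance])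
    (hCE : CondIndepFun (MeasurableSpace.comap X inferInstance) hX.comap_le
      (fun ω => (Y0 ω, Y1 ω)) A P)
    (Q0 Q1 : 𝓧 → ℝ) (hQ0m : Measurable Q0) (hQ1m : Measurable Q1)
    (hQ1 : P[fun ω => A ω * (Y ω - Q1 (X ω)) | MeasurableSpace.comap X inferInstance]
      =ᵐ[P] fun _ => (0 : ℝ))
    (hQ0 : P[fun ω => (1 - A ω) * (Y ω - Q0 (X ω)) | MeasurableSpace.comap X inferInstance]
      =ᵐ[P] fun _ => (0 : ℝ))
    (hIY : Integrable (fun ω => Y1 ω - Y0 ω) P)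
    (hIQ1 : Integrable (fun ω => A ω * (Y ω - Q1 (X ω))) P)
    (hIQ0 : Integrable (fun ω => (1 - A ω) * (Y ω - Q0 (X ω))) P) :
    (fun ω => Q1 (X ω) - Q0 (X ω)) =ᵐ[P]
      P[fun ω => Y1 ω - Y0 ω | MeasurableSpace.comap X inferInstance] := by
  have hXm : Measurable[MeasurableSpace.comap X inferInstance] X := Measurable.of_comap_le le_rfl
  have hWm : Measurable[MeasurableSpace.comap (fun ω => (Y0 ω, Y1 ω)) inferInstance]
      fun ω => (Y0 ω, Y1 ω) := Measurable.of_comap_le le_rfl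
  exact sub_ae_eq_condExp_sub_of_condIndep hX.comap_le (hY0.prodMk hY1).comap_le hA
    (measurable_fst.comp hWm) (measurable_snd.comp hWm) hA01 (funext hYdef)
    (hprm.comp hXm).stronglyMeasurable (fun ω => hpr (X ω)) hprCE
    ((condIndepFun_iff_condIndep _ _ _ _ _).mp hCE)
    (hQ0m.comp hXm).stronglyMeasurable (hQ1m.comp hXm).stronglyMeasurable hQ1 hQ0 hIY hIQ1 hIQ0
end

section
/- For all measurable g, g* : 𝒱 → ℝ, assuming w·(φ − g*(V))², w·(φ − g*(V))·(g(V) − g*(V)) and w·(g(V) − g*(V))² are integrable, the map t ↦ E[w·(φ − (g*(V) + t·(g(V) − g*(V))))²] (t ∈ ℝ) is differentiable at t = 0, with derivative equal to −2·E[(λ(π(X))·R + w·(Q¹(X) − Q⁰(X) − g*(V)))·(g(V) − g*(V))], where R := (A/π(X))·(Y − Q¹(X)) − ((1−A)/(1−π(X)))·(Y − Q⁰(X)). -/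
open MeasureTheory ProbabilityTheory

/-- The weight `w = (A − π(X))·λ'(π(X)) + λ(π(X))`. -/
noncomputable def wFun {Ω 𝓧 : Type*} (lam lam' : ℝ → ℝ) (A : Ω → ℝ) (X : Ω → 𝓧)
    (p : 𝓧 → ℝ) (ω : Ω) : ℝ :=
  (A ω - p (X ω)) * lam' (p (X ω)) + lam (p (X ω))

/-- The pseudo-outcome
`φ = (λ(π(X))/w)·[(A/π(X))(Y − Q¹(X)) − ((1−A)/(1−π(X)))(Y − Q⁰(X))] + Q¹(X) − Q⁰(X)`. -/
noncomputable def phiFun {Ω 𝓧 : Type*} (lam lam' : ℝ → ℝ) (A Y : Ω → ℝ) (X : Ω → 𝓧)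
    (p q0 q1 : 𝓧 → ℝ) (ω : Ω) : ℝ :=
  lam (p (X ω)) / wFun lam lam' A X p ω *
      (A ω / p (X ω) * (Y ω - q1 (X ω)) - (1 - A ω) / (1 - p (X ω)) * (Y ω - q0 (X ω)))
    + q1 (X ω) - q0 (X ω)

/-!
The risk is a quadratic polynomial in `t` whose coefficients are the three integrals assumed to
exist, so its derivative at `0` is `-2 E[w (φ - g*(V)) (g(V) - g*(V))]`. Where `w ≠ 0` the factor
`w` cancels the denominator of `φ`, turning `w (φ - g*(V))` into `λ(π(X)) R + w (Q¹ - Q⁰ - g*)(X)`.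
-/

section WeightedSquare

variable {Ω : Type*} [MeasurableSpace Ω] {μ : Measure Ω} {w e d : Ω → ℝ}

theorem integral_mul_sub_mul_sq (h₁ : Integrable (fun ω => w ω * e ω ^ 2) μ)
    (h₂ : Integrable (fun ω => w ω * e ω * d ω) μ) (h₃ : Integrable (fun ω => w ω * d ω ^ 2) μ)
    (t : ℝ) :
    ∫ ω, w ω * (e ω - t * d ω) ^ 2 ∂μ
      = ∫ ω, w ω * e ω ^ 2 ∂μ - 2 * t * ∫ ω, w ω * e ω * d ω ∂μ
        + t ^ 2 * ∫ ω, w ω * d ω ^ 2 ∂μ := by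
  have h₂' := h₂.const_mul (2 * t)
  have h₁₂ : Integrable (fun ω => w ω * e ω ^ 2 - 2 * t * (w ω * e ω * d ω)) μ := h₁.sub h₂'
  calc ∫ ω, w ω * (e ω - t * d ω) ^ 2 ∂μ
      = ∫ ω, (w ω * e ω ^ 2 - 2 * t * (w ω * e ω * d ω)) + t ^ 2 * (w ω * d ω ^ 2) ∂μ := by
        congr 1 with ω; ring
    _ = _ := by
        rw [integral_add h₁₂ (h₃.const_mul _), integral_sub h₁ h₂',
          integral_const_mul, integral_const_mul]

theorem hasDerivAt_integral_mul_sub_mul_sq (h₁ : Integrable (fun ω => w ω * e ω ^ 2) μ)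
    (h₂ : Integrable (fun ω => w ω * e ω * d ω) μ) (h₃ : Integrable (fun ω => w ω * d ω ^ 2) μ)
    (t : ℝ) :
    HasDerivAt (fun s : ℝ => ∫ ω, w ω * (e ω - s * d ω) ^ 2 ∂μ)
      (-2 * ∫ ω, w ω * e ω * d ω ∂μ + 2 * t * ∫ ω, w ω * d ω ^ 2 ∂μ) t := by
  rw [funext (integral_mul_sub_mul_sq h₁ h₂ h₃)]
  have hlin := ((hasDerivAt_id t).const_mul 2).mul_const (∫ ω, w ω * e ω * d ω ∂μ)
  have hsq := (hasDerivAt_pow 2 t).mul_const (∫ ω, w ω * d ω ^ 2 ∂μ)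
  exact (((hasDerivAt_const t (∫ ω, w ω * e ω ^ 2 ∂μ)).sub hlin).add hsq).congr_deriv
    (by norm_num)

end WeightedSquare

theorem wFun_mul_phiFun_sub {Ω 𝓧 : Type*} {lam lam' : ℝ → ℝ} {A Y : Ω → ℝ} {X : Ω → 𝓧}
    {p q0 q1 : 𝓧 → ℝ} {ω : Ω} (hω : wFun lam lam' A X p ω ≠ 0) (c : ℝ) :
    wFun lam lam' A X p ω * (phiFun lam lam' A Y X p q0 q1 ω - c)
      = lam (p (X ω)) *
          (A ω / p (X ω) * (Y ω - q1 (X ω)) - (1 - A ω) / (1 - p (X ω)) * (Y ω - q0 (X ω)))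
        + wFun lam lam' A X p ω * (q1 (X ω) - q0 (X ω) - c) := by
  rw [phiFun]
  field_simp
  ring

theorem stmt6_general {Ω 𝓧 𝓥 : Type*} [MeasurableSpace Ω] (P : Measure Ω)
    (X : Ω → 𝓧) (v : 𝓧 → 𝓥) (A Y : Ω → ℝ) (pr : 𝓧 → ℝ) (Q0 Q1 : 𝓧 → ℝ)
    (lam lam' : ℝ → ℝ) (hw : ∀ᵐ ω ∂P, wFun lam lam' A X pr ω ≠ 0) (g gstar : 𝓥 → ℝ)
    (hI1 : Integrable (fun ω => wFun lam lam' A X pr ω *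
      (phiFun lam lam' A Y X pr Q0 Q1 ω - gstar (v (X ω))) ^ 2) P)
    (hI2 : Integrable (fun ω => wFun lam lam' A X pr ω *
      (phiFun lam lam' A Y X pr Q0 Q1 ω - gstar (v (X ω))) * (g (v (X ω)) - gstar (v (X ω)))) P)
    (hI3 : Integrable (fun ω => wFun lam lam' A X pr ω *
      (g (v (X ω)) - gstar (v (X ω))) ^ 2) P) :
    HasDerivAt
      (fun t : ℝ => ∫ ω, wFun lam lam' A X pr ω *
        (phiFun lam lam' A Y X pr Q0 Q1 ω
          - (gstar (v (X ω)) + t * (g (v (X ω)) - gstar (v (X ω))))) ^ 2 ∂P)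
      (-2 * ∫ ω,
        (lam (pr (X ω)) *
            (A ω / pr (X ω) * (Y ω - Q1 (X ω))
              - (1 - A ω) / (1 - pr (X ω)) * (Y ω - Q0 (X ω)))
          + wFun lam lam' A X pr ω * (Q1 (X ω) - Q0 (X ω) - gstar (v (X ω))))
          * (g (v (X ω)) - gstar (v (X ω))) ∂P)
      0 := by
  have hderiv := hasDerivAt_integral_mul_sub_mul_sq hI1 hI2 hI3 0
  have hcancel : ∀ᵐ ω ∂P,
      wFun lam lam' A X pr ω * (phiFun lam lam' A Y X pr Q0 Q1 ω - gstar (v (X ω)))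
          * (g (v (X ω)) - gstar (v (X ω)))
        = (lam (pr (X ω)) *
              (A ω / pr (X ω) * (Y ω - Q1 (X ω)) - (1 - A ω) / (1 - pr (X ω)) * (Y ω - Q0 (X ω)))
            + wFun lam lam' A X pr ω * (Q1 (X ω) - Q0 (X ω) - gstar (v (X ω))))
          * (g (v (X ω)) - gstar (v (X ω))) :=
    hw.mono fun ω hω => by rw [wFun_mul_phiFun_sub hω]
  rw [integral_congr_ae hcancel, mul_zero, zero_mul, add_zero] at hderiv
  convert hderiv using 1
  funext t
  congr 1 with ω
  ring

/-- the weighted population risk `t ↦ E[w(φ − (g* + t(g − g*))(V))²]` is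
differentiable at `t = 0` with derivative
`−2·E[(λ(π(X))·R + w·(Q¹(X) − Q⁰(X) − g*(V)))·(g(V) − g*(V))]`. -/
theorem stmt6 {Ω 𝓧 𝓥 : Type*} [MeasurableSpace Ω] [MeasurableSpace 𝓧] [MeasurableSpace 𝓥]
    (P : Measure Ω) [IsProbabilityMeasure P]
    (X : Ω → 𝓧) (hX : Measurable X) (v : 𝓧 → 𝓥) (hv : Measurable v)
    (A Y : Ω → ℝ) (hA : Measurable A) (hY : Measurable Y)
    (pr : 𝓧 → ℝ) (hprm : Measurable pr) (hpr : ∀ x, 0 < pr x ∧ pr x < 1)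
    (Q0 Q1 : 𝓧 → ℝ) (hQ0m : Measurable Q0) (hQ1m : Measurable Q1)
    (lam lam' : ℝ → ℝ) (hlam : ∀ p, HasDerivAt lam (lam' p) p) (hlam' : Continuous lam')
    (hw : ∀ᵐ ω ∂P, wFun lam lam' A X pr ω ≠ 0)
    (g gstar : 𝓥 → ℝ) (hg : Measurable g) (hgstar : Measurable gstar)
    (hI1 : Integrable (fun ω => wFun lam lam' A X pr ω *
      (phiFun lam lam' A Y X pr Q0 Q1 ω - gstar (v (X ω))) ^ 2) P)
    (hI2 : Integrable (fun ω => wFun lam lam' A X pr ω *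
      (phiFun lam lam' A Y X pr Q0 Q1 ω - gstar (v (X ω))) * (g (v (X ω)) - gstar (v (X ω)))) P)
    (hI3 : Integrable (fun ω => wFun lam lam' A X pr ω *
      (g (v (X ω)) - gstar (v (X ω))) ^ 2) P) :
    HasDerivAt
      (fun t : ℝ => ∫ ω, wFun lam lam' A X pr ω *
        (phiFun lam lam' A Y X pr Q0 Q1 ω
          - (gstar (v (X ω)) + t * (g (v (X ω)) - gstar (v (X ω))))) ^ 2 ∂P)
      (-2 * ∫ ω,
        (lam (pr (X ω)) *
            (A ω / pr (X ω) * (Y ω - Q1 (X ω))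
              - (1 - A ω) / (1 - pr (X ω)) * (Y ω - Q0 (X ω)))
          + wFun lam lam' A X pr ω * (Q1 (X ω) - Q0 (X ω) - gstar (v (X ω))))
          * (g (v (X ω)) - gstar (v (X ω))) ∂P)
      0 :=
  stmt6_general P X v A Y pr Q0 Q1 lam lam' hw g gstar hI1 hI2 hI3
end

section
/- Neyman-orthogonality of the weighted risk in the Q¹-direction: for all measurable g, g* : 𝒱 → ℝ and every measurable direction h : 𝒳 → ℝ (all displayed random variables integrable), E[(λ(π(X))·A/π(X) − w)·h(X)·(g(V) − g*(V))] = 0, where w := (A − π(X))·λ'(π(X)) + λ(π(X)); equivalently, the directional derivative of the risk-gradient in g, taken in the direction of a perturbation of the outcome regression Q¹, vanishes at the truth. -/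
open MeasureTheory ProbabilityTheory

/-- Neyman-orthogonality of the weighted risk in the `Q¹`-direction:
`E[(λ(π(X))·A/π(X) − w)·h(X)·(g(V) − g*(V))] = 0`. -/
theorem stmt7 {Ω 𝓧 𝓥 : Type*} [MeasurableSpace Ω] [MeasurableSpace 𝓧] [MeasurableSpace 𝓥]
    (P : Measure Ω) [IsProbabilityMeasure P]
    (X : Ω → 𝓧) (hX : Measurable X) (v : 𝓧 → 𝓥) (hv : Measurable v)
    (A : Ω → ℝ) (hA : Measurable A) (hA01 : ∀ ω, A ω = 0 ∨ A ω = 1)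
    (pr : 𝓧 → ℝ) (hprm : Measurable pr) (hpr : ∀ x, 0 < pr x ∧ pr x < 1)
    (hprCE : (fun ω => pr (X ω)) =ᵐ[P] P[A | MeasurableSpace.comap X inferInstance])
    (lam lam' : ℝ → ℝ) (hlam : ∀ p, HasDerivAt lam (lam' p) p) (hlam' : Continuous lam')
    (h : 𝓧 → ℝ) (hh : Measurable h)
    (g gstar : 𝓥 → ℝ) (hg : Measurable g) (hgstar : Measurable gstar)
    (hI : Integrable (fun ω =>
      (lam (pr (X ω)) * A ω / pr (X ω) - wFun lam lam' A X pr ω) * h (X ω)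
        * (g (v (X ω)) - gstar (v (X ω)))) P) :
    ∫ ω, (lam (pr (X ω)) * A ω / pr (X ω) - wFun lam lam' A X pr ω) * h (X ω)
        * (g (v (X ω)) - gstar (v (X ω))) ∂P = 0 := by
  have hm : MeasurableSpace.comap X inferInstance ≤ (inferInstance : MeasurableSpace Ω) :=
    hX.comap_le
  set m := MeasurableSpace.comap X (inferInstance : MeasurableSpace 𝓧)
  -- the σ(X)-measurable factor
  let F : 𝓧 → ℝ := fun x =>
    (lam (pr x) / pr x - lam' (pr x)) * (h x * (g (v x) - gstar (v x)))
  -- pointwise factorization of the integrand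
  have hfac : ∀ ω,
      (lam (pr (X ω)) * A ω / pr (X ω) - wFun lam lam' A X pr ω) * h (X ω)
        * (g (v (X ω)) - gstar (v (X ω)))
      = F (X ω) * (A ω - pr (X ω)) := by
    intro ω
    have hp : pr (X ω) ≠ 0 := (hpr (X ω)).1.ne'
    simp only [wFun, F]
    field_simp
    ring
  have hlamC : Continuous lam := by
    have hd : Differentiable ℝ lam := fun p => (hlam p).differentiableAt
    exact hd.continuous
  have hFm : Measurable F := by
    apply Measurable.mul
    · exact ((hlamC.measurable.comp hprm).div hprm).sub (hlam'.measurable.comp hprm)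
    · exact hh.mul ((hg.comp hv).sub (hgstar.comp hv))
  have hXm : Measurable[m] X := fun s hs => ⟨s, hs, rfl⟩
  have hFXm : StronglyMeasurable[m] (fun ω => F (X ω)) :=
    (hFm.comp hXm).stronglyMeasurable
  -- integrability of A - pr∘X (bounded by 2 on a probability space)
  have hAb : ∀ ω, |A ω| ≤ 1 := by
    intro ω; rcases hA01 ω with ha | ha <;> simp [ha]
  have hG : Integrable (fun ω => A ω - pr (X ω)) P := by
    refine (integrable_const (2 : ℝ)).mono' ?_ ?_
    · exact (hA.sub (hprm.comp hX)).aestronglyMeasurable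
    · refine Filter.Eventually.of_forall fun ω => ?_
      have h1 := hAb ω
      have h2 : |pr (X ω)| ≤ 1 := by
        have h3 := hpr (X ω); rw [abs_of_pos h3.1]; exact h3.2.le
      calc ‖A ω - pr (X ω)‖ ≤ |A ω| + |pr (X ω)| := abs_sub _ _
        _ ≤ 2 := by linarith
  have hI' : Integrable ((fun ω => F (X ω)) * fun ω => A ω - pr (X ω)) P := by
    refine hI.congr (Filter.Eventually.of_forall fun ω => ?_)
    exact hfac ω
  -- pull-out property
  have hpull := condExp_mul_of_stronglyMeasurable_left (μ := P) hFXm hI' hG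
  have hprInt : Integrable (fun ω => pr (X ω)) P := by
    refine (integrable_const (1 : ℝ)).mono' ?_ ?_
    · exact (hprm.comp hX).aestronglyMeasurable
    · refine Filter.Eventually.of_forall fun ω => ?_
      have h3 := hpr (X ω)
      simp only [Real.norm_eq_abs, abs_of_pos h3.1]
      exact h3.2.le
  have hAInt : Integrable A P := by
    refine (integrable_const (1 : ℝ)).mono' hA.aestronglyMeasurable ?_
    exact Filter.Eventually.of_forall fun ω => hAb ω
  -- condExp of A - pr∘X is 0 a.e.
  have hprXm : StronglyMeasurable[m] (fun ω => pr (X ω)) :=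
    (hprm.comp hXm).stronglyMeasurable
  have hCE0 : P[(fun ω => A ω - pr (X ω)) | m] =ᵐ[P] 0 := by
    have heq : (fun ω => A ω - pr (X ω)) = A - fun ω => pr (X ω) := rfl
    have h1 := condExp_sub (μ := P) (m := m) hAInt hprInt
    have h2 : P[(fun ω => pr (X ω)) | m] =ᵐ[P] (fun ω => pr (X ω)) := by
      rw [condExp_of_stronglyMeasurable hm hprXm hprInt]
    rw [heq]
    filter_upwards [h1, h2, hprCE] with ω hω1 hω2 hω3
    simp only [Pi.sub_apply, Pi.zero_apply] at *
    rw [hω1, hω2, ← hω3]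
    ring
  -- conclude
  have hCE : P[(fun ω => F (X ω)) * (fun ω => A ω - pr (X ω)) | m] =ᵐ[P] 0 := by
    filter_upwards [hpull, hCE0] with ω hω1 hω2
    simp only [Pi.mul_apply, Pi.zero_apply] at *
    rw [hω1, hω2, mul_zero]
  calc ∫ ω, (lam (pr (X ω)) * A ω / pr (X ω) - wFun lam lam' A X pr ω) * h (X ω)
        * (g (v (X ω)) - gstar (v (X ω))) ∂P
      = ∫ ω, ((fun ω => F (X ω)) * fun ω => A ω - pr (X ω)) ω ∂P :=
        integral_congr_ae (Filter.Eventually.of_forall fun ω => hfac ω)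
    _ = ∫ ω, (P[(fun ω => F (X ω)) * (fun ω => A ω - pr (X ω)) | m]) ω ∂P :=
        (integral_condExp hm).symm
    _ = 0 := by
        rw [integral_congr_ae hCE]; simp
end

section
/- Neyman-orthogonality of the weighted risk in the Q⁰-direction: for all measurable g, g* : 𝒱 → ℝ and every measurable direction h : 𝒳 → ℝ (all displayed random variables integrable), E[(λ(π(X))·(1−A)/(1−π(X)) − w)·h(X)·(g(V) − g*(V))] = 0, where w := (A − π(X))·λ'(π(X)) + λ(π(X)); equivalently, the directional derivative of the risk-gradient in g, taken in the direction of a perturbation of the outcome regression Q⁰, vanishes at the truth. -/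
/-!
Since `A ∈ {0,1}`, the integrand is `F₀(X)·(1 − A) + F₁(X)·A` for measurable `F₀, F₁` on `𝒳`.
Conditioning on `X` replaces `A` by `π(X)`, and `F₀·(1 − π) + F₁·π` vanishes identically:
the `1/(1 − π)` weight and the `λ'` correction term are tuned exactly so that this happens.
Hence the conditional expectation of the integrand given `X` is `0`, and so is its expectation.
-/

open MeasureTheory ProbabilityTheory

section BinaryTreatment

variable {Ω : Type*} {m mΩ : MeasurableSpace Ω} {P : Measure Ω} [IsFiniteMeasure P]
  {A : Ω → ℝ}

lemma integrable_of_forall_eq_zero_or_eq_one (hA : Measurable A)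
    (hA01 : ∀ ω, A ω = 0 ∨ A ω = 1) : Integrable A P :=
  .of_bound hA.aestronglyMeasurable 1 <| .of_forall fun ω => by
    rcases hA01 ω with h | h <;> simp [h]

lemma condExp_mixture_ae_eq (hm : m ≤ mΩ) (hA : Measurable A) (hA01 : ∀ ω, A ω = 0 ∨ A ω = 1)
    {p Y₀ Y₁ : Ω → ℝ} (hp : p =ᵐ[P] P[A | m])
    (hY₀ : StronglyMeasurable[m] Y₀) (hY₁ : StronglyMeasurable[m] Y₁)
    (hI : Integrable (fun ω => Y₀ ω * (1 - A ω) + Y₁ ω * A ω) P) :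
    P[fun ω => Y₀ ω * (1 - A ω) + Y₁ ω * A ω | m]
      =ᵐ[P] fun ω => Y₀ ω * (1 - p ω) + Y₁ ω * p ω := by
  have hAi : Integrable A P := integrable_of_forall_eq_zero_or_eq_one hA hA01
  have h1Ai : Integrable (fun ω => 1 - A ω) P := (integrable_const 1).sub hAi
  have hbound : ∀ ω, ‖A ω‖ ≤ 1 ∧ ‖1 - A ω‖ ≤ 1 := fun ω => by
    rcases hA01 ω with h | h <;> simp [h]
  have hI₀ : Integrable (Y₀ * fun ω => 1 - A ω) P := by
    refine (hI.mul_bdd (measurable_const.sub hA).aestronglyMeasurable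
      (.of_forall fun ω => (hbound ω).2)).congr (.of_forall fun ω => ?_)
    rcases hA01 ω with h | h <;> simp [h]
  have hI₁ : Integrable (Y₁ * A) P := by
    refine (hI.mul_bdd hA.aestronglyMeasurable
      (.of_forall fun ω => (hbound ω).1)).congr (.of_forall fun ω => ?_)
    rcases hA01 ω with h | h <;> simp [h]
  have h1p : P[fun ω => 1 - A ω | m] =ᵐ[P] fun ω => 1 - p ω := by
    filter_upwards [condExp_sub (integrable_const 1) hAi m, hp] with ω hω hpω
    simp only [Pi.sub_apply, condExp_const hm] at hω
    rw [← hpω] at hω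
    exact hω
  filter_upwards [condExp_add hI₀ hI₁ m, condExp_mul_of_stronglyMeasurable_left hY₀ hI₀ h1Ai,
    condExp_mul_of_stronglyMeasurable_left hY₁ hI₁ hAi, h1p, hp] with ω hsum h₀ h₁ h1pω hpω
  calc P[fun ω => Y₀ ω * (1 - A ω) + Y₁ ω * A ω | m] ω
      = P[(Y₀ * fun ω => 1 - A ω) + Y₁ * A | m] ω := rfl
    _ = Y₀ ω * (1 - p ω) + Y₁ ω * p ω := by
      rw [hsum, Pi.add_apply, h₀, h₁, Pi.mul_apply, Pi.mul_apply, h1pω, hpω]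

lemma integral_mixture_eq (hm : m ≤ mΩ) (hA : Measurable A) (hA01 : ∀ ω, A ω = 0 ∨ A ω = 1)
    {p Y₀ Y₁ : Ω → ℝ} (hp : p =ᵐ[P] P[A | m])
    (hY₀ : StronglyMeasurable[m] Y₀) (hY₁ : StronglyMeasurable[m] Y₁)
    (hI : Integrable (fun ω => Y₀ ω * (1 - A ω) + Y₁ ω * A ω) P) :
    ∫ ω, Y₀ ω * (1 - A ω) + Y₁ ω * A ω ∂P = ∫ ω, Y₀ ω * (1 - p ω) + Y₁ ω * p ω ∂P := by
  rw [← integral_condExp hm]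
  exact integral_congr_ae (condExp_mixture_ae_eq hm hA hA01 hp hY₀ hY₁ hI)

end BinaryTreatment

/-- Neyman-orthogonality of the weighted risk in the `Q⁰`-direction:
`E[(λ(π(X))·(1−A)/(1−π(X)) − w)·h(X)·(g(V) − g*(V))] = 0`. -/
theorem stmt8 {Ω 𝓧 𝓥 : Type*} [MeasurableSpace Ω] [MeasurableSpace 𝓧] [MeasurableSpace 𝓥]
    (P : Measure Ω) [IsProbabilityMeasure P]
    (X : Ω → 𝓧) (hX : Measurable X) (v : 𝓧 → 𝓥) (hv : Measurable v)
    (A : Ω → ℝ) (hA : Measurable A) (hA01 : ∀ ω, A ω = 0 ∨ A ω = 1)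
    (pr : 𝓧 → ℝ) (hprm : Measurable pr) (hpr : ∀ x, 0 < pr x ∧ pr x < 1)
    (hprCE : (fun ω => pr (X ω)) =ᵐ[P] P[A | MeasurableSpace.comap X inferInstance])
    (lam lam' : ℝ → ℝ) (hlam : ∀ p, HasDerivAt lam (lam' p) p) (hlam' : Continuous lam')
    (h : 𝓧 → ℝ) (hh : Measurable h)
    (g gstar : 𝓥 → ℝ) (hg : Measurable g) (hgstar : Measurable gstar)
    (hI : Integrable (fun ω =>
      (lam (pr (X ω)) * (1 - A ω) / (1 - pr (X ω)) - wFun lam lam' A X pr ω) * h (X ω)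
        * (g (v (X ω)) - gstar (v (X ω)))) P) :
    ∫ ω, (lam (pr (X ω)) * (1 - A ω) / (1 - pr (X ω)) - wFun lam lam' A X pr ω) * h (X ω)
        * (g (v (X ω)) - gstar (v (X ω))) ∂P = 0 := by
  have hlamm : Measurable lam :=
    (continuous_iff_continuousAt.2 fun p => (hlam p).continuousAt).measurable
  set F₀ : 𝓧 → ℝ := fun x => (lam (pr x) / (1 - pr x) + pr x * lam' (pr x) - lam (pr x))
    * h x * (g (v x) - gstar (v x))
  set F₁ : 𝓧 → ℝ := fun x => -((1 - pr x) * lam' (pr x) + lam (pr x))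
    * h x * (g (v x) - gstar (v x))
  have hF₀ : StronglyMeasurable[.comap X inferInstance] fun ω => F₀ (X ω) :=
    ((by fun_prop : Measurable F₀).comp (comap_measurable X)).stronglyMeasurable
  have hF₁ : StronglyMeasurable[.comap X inferInstance] fun ω => F₁ (X ω) :=
    ((by fun_prop : Measurable F₁).comp (comap_measurable X)).stronglyMeasurable
  have hsplit : (fun ω => (lam (pr (X ω)) * (1 - A ω) / (1 - pr (X ω))
      - wFun lam lam' A X pr ω) * h (X ω) * (g (v (X ω)) - gstar (v (X ω))))
      = fun ω => F₀ (X ω) * (1 - A ω) + F₁ (X ω) * A ω := by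
    funext ω
    rcases hA01 ω with hω | hω <;> simp only [F₀, F₁, wFun, hω] <;> ring
  have hcancel : ∀ x, F₀ x * (1 - pr x) + F₁ x * pr x = 0 := fun x => by
    have : 1 - pr x ≠ 0 := (sub_pos.2 (hpr x).2).ne'
    simp only [F₀, F₁]
    field_simp
    ring
  rw [hsplit] at hI ⊢
  rw [integral_mixture_eq hX.comap_le hA hA01 hprCE hF₀ hF₁ hI]
  simp [hcancel]
end
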